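/- arXiv:2405.05119 — 8 statements merged into one kernel-verified Lean document; each statement's English description precedes it below -/
import Mathlib

section
/- For every integer β ≥ 1 and every real q ∈ (0,1], and for every t ∈ {0,1,…,β}, the Lagrange rollout coefficient satisfies |h_{t,q}| ≤ (β/q)^β. -/
open Finset

/-- The Lagrange rollout coefficients
`h_{t,q} = ∏_{s=0,s≠t}^{β} ((β/q − s)/(t − s)) − ∏_{s=0,s≠t}^{β} ((−s)/(t − s))`. -/
noncomputable def hcoef (β : ℕ) (q : ℝ) (t : ℕ) : ℝ :=
  (∏ s ∈ (Finset.range (β + 1)).erase t, (((β : ℝ) / q - (s : ℝ)) / ((t : ℝ) - (s : ℝ)))) -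
  (∏ s ∈ (Finset.range (β + 1)).erase t, ((-(s : ℝ)) / ((t : ℝ) - (s : ℝ))))

/-- for every integer `β ≥ 1`, real `q ∈ (0,1]`, and `t ∈ {0,…,β}`,
`|h_{t,q}| ≤ (β/q)^β`. -/
theorem stmt_2 (β : ℕ) (hβ : 1 ≤ β) (q : ℝ) (hq0 : 0 < q) (hq1 : q ≤ 1)
    (t : ℕ) (ht : t ≤ β) :
    |hcoef β q t| ≤ ((β : ℝ) / q) ^ β := by
  set B : ℝ := (β : ℝ) / q with hBdef
  have hβ1 : (1 : ℝ) ≤ (β : ℝ) := by exact_mod_cast hβ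
  have hβB : (β : ℝ) ≤ B := by
    rw [hBdef, le_div_iff₀ hq0]
    nlinarith
  have hB1 : (1 : ℝ) ≤ B := le_trans hβ1 hβB
  have hcard : ((Finset.range (β + 1)).erase t).card = β := by
    rw [Finset.card_erase_of_mem (Finset.mem_range.mpr (Nat.lt_succ_of_le ht)),
      Finset.card_range]
    omega
  have hsle : ∀ s ∈ (Finset.range (β + 1)).erase t, (s : ℝ) ≤ B := by
    intro s hs
    have : s ≤ β := Nat.lt_succ_iff.mp (Finset.mem_range.mp (Finset.mem_of_mem_erase hs))
    have : (s : ℝ) ≤ (β : ℝ) := by exact_mod_cast this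
    linarith
  have habs : ∀ s ∈ (Finset.range (β + 1)).erase t, (1 : ℝ) ≤ |(t : ℝ) - (s : ℝ)| := by
    intro s hs
    have hst : s ≠ t := Finset.ne_of_mem_erase hs
    have h0 : ((t : ℤ) - (s : ℤ)) ≠ 0 := sub_ne_zero.mpr (by exact_mod_cast hst.symm)
    have h1 : (1 : ℤ) ≤ |(t : ℤ) - (s : ℤ)| := Int.one_le_abs h0
    have h2 : ((1 : ℤ) : ℝ) ≤ (|(t : ℤ) - (s : ℤ)| : ℝ) := by exact_mod_cast h1
    push_cast at h2
    exact h2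
  rcases Nat.eq_zero_or_pos t with ht0 | htpos
  · subst ht0
    -- second product equals 1
    have hQ : (∏ s ∈ (Finset.range (β + 1)).erase 0,
        ((-(s : ℝ)) / ((0 : ℕ) - (s : ℝ)))) = 1 := by
      apply Finset.prod_eq_one
      intro s hs
      have hs0 : s ≠ 0 := Finset.ne_of_mem_erase hs
      have hs0' : (s : ℝ) ≠ 0 := Nat.cast_ne_zero.mpr hs0
      rw [Nat.cast_zero, zero_sub, neg_div_neg_eq, div_self hs0']
    have hP : |∏ s ∈ (Finset.range (β + 1)).erase 0,
        ((B - (s : ℝ)) / ((0 : ℕ) - (s : ℝ)))| ≤ (B - 1) ^ β := by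
      rw [Finset.abs_prod]
      calc ∏ s ∈ (Finset.range (β + 1)).erase 0, |(B - (s : ℝ)) / ((0 : ℕ) - (s : ℝ))|
          ≤ ∏ _s ∈ (Finset.range (β + 1)).erase 0, (B - 1) := by
            apply Finset.prod_le_prod (fun s _ => abs_nonneg _)
            intro s hs
            have hs0 : s ≠ 0 := Finset.ne_of_mem_erase hs
            have hs1 : (1 : ℝ) ≤ (s : ℝ) := by exact_mod_cast Nat.one_le_iff_ne_zero.mpr hs0
            have hsB : (s : ℝ) ≤ B := hsle s hs
            rw [abs_div, abs_of_nonneg (by linarith : (0 : ℝ) ≤ B - (s : ℝ))]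
            have : |((0 : ℕ) : ℝ) - (s : ℝ)| = (s : ℝ) := by
              rw [Nat.cast_zero, zero_sub, abs_neg, abs_of_nonneg (by linarith)]
            rw [this, div_le_iff₀ (by linarith : (0 : ℝ) < (s : ℝ))]
            nlinarith
        _ = (B - 1) ^ β := by rw [Finset.prod_const, hcard]
    have hsum : (B - 1) ^ β + 1 ≤ B ^ β := by
      have := pow_add_pow_le (x := B - 1) (y := (1 : ℝ)) (by linarith) (by norm_num)
        (Nat.one_le_iff_ne_zero.mp hβ)
      simpa using this
    calc |hcoef β q 0| = |(∏ s ∈ (Finset.range (β + 1)).erase 0,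
          ((B - (s : ℝ)) / ((0 : ℕ) - (s : ℝ)))) - 1| := by rw [hcoef, hQ]
      _ ≤ |∏ s ∈ (Finset.range (β + 1)).erase 0,
          ((B - (s : ℝ)) / ((0 : ℕ) - (s : ℝ)))| + |(1 : ℝ)| := abs_sub _ _
      _ ≤ (B - 1) ^ β + 1 := by rw [abs_one]; linarith
      _ ≤ B ^ β := hsum
  · -- t ≥ 1 : second product vanishes
    have h0mem : (0 : ℕ) ∈ (Finset.range (β + 1)).erase t :=
      Finset.mem_erase.mpr ⟨by omega, Finset.mem_range.mpr (by omega)⟩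
    have hQ : (∏ s ∈ (Finset.range (β + 1)).erase t,
        ((-(s : ℝ)) / ((t : ℝ) - (s : ℝ)))) = 0 := by
      apply Finset.prod_eq_zero h0mem
      simp
    rw [hcoef, hQ, sub_zero, Finset.abs_prod]
    calc ∏ s ∈ (Finset.range (β + 1)).erase t, |(B - (s : ℝ)) / ((t : ℝ) - (s : ℝ))|
        ≤ ∏ _s ∈ (Finset.range (β + 1)).erase t, B := by
          apply Finset.prod_le_prod (fun s _ => abs_nonneg _)
          intro s hs
          have hsB : (s : ℝ) ≤ B := hsle s hs
          have hs0 : (0 : ℝ) ≤ (s : ℝ) := Nat.cast_nonneg s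
          rw [abs_div, abs_of_nonneg (by linarith : (0 : ℝ) ≤ B - (s : ℝ))]
          calc (B - (s : ℝ)) / |(t : ℝ) - (s : ℝ)|
              ≤ B - (s : ℝ) := div_le_self (by linarith) (habs s hs)
            _ ≤ B := by linarith
      _ = B ^ β := by rw [Finset.prod_const, hcard]
end

section
/- Fix integers β ≥ 1 and n, and reals p ∈ (0,1], q ∈ [p,1] such that pn/q and tpn/β (for t = 0,…,β) are integers with βpn/β ≤ pn/q. Fix a subset U ⊆ [n] with |U| = pn/q. Suppose that for each t = 0,…,β, z^t ∈ {0,1}^n is a random vector whose support of 1-entries is a uniformly random subset of U of size tpn/β (units outside U are always untreated; the joint coupling of z^0,…,z^β may be arbitrary). Then E[ TTE-hat ] = (q/(np)) Σ_{i=1}^{n} Σ_{∅ ≠ S ⊆ N_i, |S| ≤ β} c_{i,S} · 1(S ⊆ U). -/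
/-!
For `S ⊆ U` with `|S| = k`, the probability that a uniformly random `m`-subset of `U` contains
`S` is `m^(k) / |U|^(k)` (falling factorials, `descPochhammer`), a polynomial of degree
`k ≤ β` in `m = t·pn/β`. Since `h_{t,q} = L_t(β/q) - L_t(0)` for the Lagrange basis `L_t` on the
nodes `0, …, β`, summing a polynomial of degree `≤ β` at the nodes against `h_{t,q}` gives its
value at `β/q` minus its value at `0`. At `t = β/q` the subset size becomes `|U|`, so the
probability is `1`; at `t = 0` it is `0` unless `S = ∅`. Linearity of expectation concludes.
-/

open Finset

open Polynomial

theorem sum_lagrangeBasis_mul_eval {F : Type*} [Field F] [CharZero F] {β : ℕ} {f : F[X]}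
    (hf : f.natDegree ≤ β) (x : F) :
    ∑ t ∈ range (β + 1), (∏ s ∈ (range (β + 1)).erase t, (x - s) / (t - s)) * f.eval (t : F) =
      f.eval x := by
  have hinj : Set.InjOn (fun i : ℕ => (i : F)) (range (β + 1)) :=
    Nat.cast_injective.injOn
  have hdeg : f.degree < #(range (β + 1)) := by
    rw [card_range]
    exact (degree_le_of_natDegree_le hf).trans_lt (by exact_mod_cast Nat.lt_succ_self β)
  conv_rhs => rw [Lagrange.eq_interpolate hinj hdeg, Lagrange.interpolate_apply, eval_finsetSum]
  refine sum_congr rfl fun t _ => ?_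
  simp only [eval_mul, eval_C, Lagrange.basis, eval_prod, Lagrange.basisDivisor, eval_sub, eval_X]
  rw [mul_comm]
  congr 1
  exact prod_congr rfl fun s _ => by rw [div_eq_inv_mul]

theorem sum_hcoef_mul_eval {β : ℕ} {f : ℝ[X]} (hf : f.natDegree ≤ β) (q a : ℝ) :
    ∑ t ∈ range (β + 1), hcoef β q t * f.eval (a * t) = f.eval (a * β / q) - f.eval 0 := by
  set g := f.comp (C a * X)
  have hg : g.natDegree ≤ β := by
    refine natDegree_comp_le.trans ?_
    calc f.natDegree * (C a * X).natDegree ≤ β * 1 :=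
          Nat.mul_le_mul hf ((natDegree_C_mul_le a X).trans natDegree_X_le)
      _ = β := mul_one β
  have hgf : ∀ x, g.eval x = f.eval (a * x) := by simp [g]
  have h1 := sum_lagrangeBasis_mul_eval hg (β / q)
  have h0 := sum_lagrangeBasis_mul_eval hg 0
  simp only [hgf, zero_sub, mul_zero] at h1 h0
  rw [mul_div_assoc, ← h1, ← h0, ← sum_sub_distrib]
  exact sum_congr rfl fun t _ => by rw [hcoef, sub_mul]

theorem card_filter_powersetCard_superset_mul_choose {α : Type*} [DecidableEq α]
    {S U : Finset α} (hSU : S ⊆ U) (m : ℕ) :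
    #((U.powersetCard m).filter (S ⊆ ·)) * (#U).choose #S = m.choose #S * (#U).choose m := by
  rcases le_or_gt #S m with hSm | hmS
  · rw [card_filter_powersetCard_subset S U m hSU hSm, mul_comm, ← Nat.choose_mul hSm, mul_comm]
  · have hempty : (U.powersetCard m).filter (S ⊆ ·) = ∅ :=
      filter_eq_empty_iff.2 fun A hA hSA =>
        (card_le_card hSA).not_gt ((mem_powersetCard.1 hA).2 ▸ hmS)
    rw [hempty, Nat.choose_eq_zero_of_lt hmS, card_empty, zero_mul, zero_mul]

structure IsUniformSubset {α Ω : Type*} [DecidableEq α] [Fintype Ω] (w : Ω → ℝ)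
    (Z : Ω → Finset α) (U : Finset α) (m : ℕ) : Prop where
  mem_powersetCard : ∀ ω, Z ω ∈ U.powersetCard m
  sum_fiber : ∀ A ∈ U.powersetCard m,
    ∑ ω ∈ univ.filter (fun ω => Z ω = A), w ω = 1 / ((#U).choose m : ℝ)

namespace IsUniformSubset

variable {α Ω : Type*} [DecidableEq α] [Fintype Ω] {w : Ω → ℝ} {Z : Ω → Finset α}
  {U : Finset α} {m : ℕ}

theorem sum_mul_eq (hZ : IsUniformSubset w Z U m) (f : Finset α → ℝ) :
    ∑ ω, w ω * f (Z ω) = (∑ A ∈ U.powersetCard m, f A) / (#U).choose m := by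
  rw [← sum_fiberwise_of_maps_to fun ω _ => hZ.mem_powersetCard ω, sum_div]
  refine sum_congr rfl fun A hA => ?_
  calc ∑ ω ∈ univ.filter (fun ω => Z ω = A), w ω * f (Z ω)
      = (∑ ω ∈ univ.filter (fun ω => Z ω = A), w ω) * f A := by
        rw [sum_mul]
        exact sum_congr rfl fun ω hω => by rw [(mem_filter.1 hω).2]
    _ = f A / (#U).choose m := by rw [hZ.sum_fiber A hA, one_div_mul_eq_div]

theorem sum_mul_ite_subset (hZ : IsUniformSubset w Z U m) (hmU : m ≤ #U) {S : Finset α}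
    (hSU : S ⊆ U) :
    ∑ ω, w ω * (if S ⊆ Z ω then 1 else 0) =
      (descPochhammer ℝ #S).eval (m : ℝ) / (descPochhammer ℝ #S).eval (#U : ℝ) := by
  have hcount : (#((U.powersetCard m).filter (S ⊆ ·)) : ℝ) * (#U).choose #S =
      m.choose #S * (#U).choose m := by
    exact_mod_cast card_filter_powersetCard_superset_mul_choose hSU m
  have hUm : ((#U).choose m : ℝ) ≠ 0 := by exact_mod_cast (Nat.choose_pos hmU).ne'
  have hUS : ((#U).choose #S : ℝ) ≠ 0 := by
    exact_mod_cast (Nat.choose_pos (card_le_card hSU)).ne'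
  have hfact : ((#S).factorial : ℝ) ≠ 0 := by exact_mod_cast (#S).factorial_ne_zero
  calc ∑ ω, w ω * (if S ⊆ Z ω then 1 else 0)
      = (#((U.powersetCard m).filter (S ⊆ ·)) : ℝ) / (#U).choose m := by
        rw [hZ.sum_mul_eq fun A => if S ⊆ A then 1 else 0, sum_boole]
    _ = (m.choose #S : ℝ) / (#U).choose #S := by
        rw [div_eq_div_iff hUm hUS, hcount]
    _ = _ := by
        rw [Nat.cast_choose_eq_descPochhammer_div, Nat.cast_choose_eq_descPochhammer_div,
          div_div_div_cancel_right₀ hfact]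

end IsUniformSubset

theorem sum_hcoef_mul_sum_mul_ite_subset {α Ω : Type*} [DecidableEq α] [Fintype Ω] {β : ℕ}
    {q a : ℝ} {U : Finset α} (hU : (#U : ℝ) = a * β / q) {m : ℕ → ℕ}
    (hm : ∀ t ≤ β, (m t : ℝ) = a * t) (hmU : ∀ t ≤ β, m t ≤ #U) {w : Ω → ℝ}
    {Z : ℕ → Ω → Finset α} (hZ : ∀ t ≤ β, IsUniformSubset w (Z t) U (m t)) {S : Finset α}
    (hSβ : #S ≤ β) :
    ∑ t ∈ range (β + 1), hcoef β q t * ∑ ω, w ω * (if S ⊆ Z t ω then 1 else 0) =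
      if S.Nonempty ∧ S ⊆ U then 1 else 0 := by
  by_cases hSU : S ⊆ U
  · set D := descPochhammer ℝ #S
    have hDU : D.eval (#U : ℝ) ≠ 0 := by
      rw [descPochhammer_eval_eq_descFactorial, Nat.cast_ne_zero, Ne,
        Nat.descFactorial_eq_zero_iff_lt, not_lt]
      exact card_le_card hSU
    calc ∑ t ∈ range (β + 1), hcoef β q t * ∑ ω, w ω * (if S ⊆ Z t ω then 1 else 0)
        = (∑ t ∈ range (β + 1), hcoef β q t * D.eval (a * t)) / D.eval (#U : ℝ) := by
          rw [sum_div]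
          refine sum_congr rfl fun t ht => ?_
          have htβ : t ≤ β := Nat.lt_succ_iff.1 (mem_range.1 ht)
          rw [(hZ t htβ).sum_mul_ite_subset (hmU t htβ) hSU, hm t htβ, mul_div_assoc]
      _ = 1 - D.eval 0 / D.eval (#U : ℝ) := by
          rw [sum_hcoef_mul_eval (descPochhammer_natDegree ℝ #S ▸ hSβ), ← hU, sub_div,
            div_self hDU]
      _ = if S.Nonempty ∧ S ⊆ U then 1 else 0 := by
          rcases S.eq_empty_or_nonempty with rfl | hS
          · simp [D]
          · simp [D, hS, hSU, hS.card_ne_zero]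
  · rw [if_neg fun h => hSU h.2]
    refine sum_eq_zero fun t ht => ?_
    have hZU : ∀ ω, Z t ω ⊆ U := fun ω =>
      (mem_powersetCard.1 ((hZ t (Nat.lt_succ_iff.1 (mem_range.1 ht))).mem_powersetCard ω)).1
    have hSZ : ∀ ω, ¬S ⊆ Z t ω := fun ω hSZ => hSU (hSZ.trans (hZU ω))
    simp [hSZ]

theorem stmt_7_general (β n : ℕ) (hβ : 1 ≤ β)
    (p q : ℝ)
    (Nbhd : Fin n → Finset (Fin n)) (c : Fin n → Finset (Fin n) → ℝ)
    (U : Finset (Fin n)) (hU : (U.card : ℝ) = p * (n : ℝ) / q)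
    (m : ℕ → ℕ) (hm : ∀ t, t ≤ β → (m t : ℝ) = (t : ℝ) * p * (n : ℝ) / (β : ℝ))
    (hmU : m β ≤ U.card)
    (Ω : Type) [Fintype Ω]
    (w : Ω → ℝ)
    (Z : ℕ → Ω → Finset (Fin n))
    (hZU : ∀ t, t ≤ β → ∀ ω, Z t ω ⊆ U)
    (hZcard : ∀ t, t ≤ β → ∀ ω, (Z t ω).card = m t)
    (hZunif : ∀ t, t ≤ β → ∀ A : Finset (Fin n), A ⊆ U → A.card = m t →
      (∑ ω ∈ Finset.univ.filter (fun ω => Z t ω = A), w ω) = 1 / (U.card.choose (m t) : ℝ)) :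
    (∑ ω, w ω * ((q / ((n : ℝ) * p)) * ∑ t ∈ Finset.range (β + 1), hcoef β q t *
        ∑ i, ∑ S ∈ (Nbhd i).powerset.filter (fun S => S.card ≤ β),
          c i S * ∏ j ∈ S, (if j ∈ Z t ω then (1 : ℝ) else 0))) =
      (q / ((n : ℝ) * p)) *
        ∑ i, ∑ S ∈ (Nbhd i).powerset.filter (fun S => S.Nonempty ∧ S.card ≤ β),
          c i S * (if S ⊆ U then (1 : ℝ) else 0) := by
  have hβ0 : (0 : ℝ) < β := by exact_mod_cast hβ
  have hma : ∀ t ≤ β, (m t : ℝ) = p * n / β * t := fun t ht => by rw [hm t ht]; ring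
  have hUa : (#U : ℝ) = p * n / β * β / q := by rw [hU, div_mul_cancel₀ _ hβ0.ne']
  have ha : 0 ≤ p * n / β := nonneg_of_mul_nonneg_left (hma β le_rfl ▸ (m β).cast_nonneg) hβ0
  have hmU' : ∀ t ≤ β, m t ≤ #U := fun t ht => by
    have hmono : (m t : ℝ) ≤ m β := by
      rw [hma t ht, hma β le_rfl]
      exact mul_le_mul_of_nonneg_left (by exact_mod_cast ht) ha
    exact (Nat.cast_le.1 hmono).trans hmU
  have hunif : ∀ t ≤ β, IsUniformSubset w (Z t) U (m t) := fun t ht =>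
    ⟨fun ω => mem_powersetCard.2 ⟨hZU t ht ω, hZcard t ht ω⟩,
      fun A hA => hZunif t ht A (mem_powersetCard.1 hA).1 (mem_powersetCard.1 hA).2⟩
  simp only [prod_boole, ← subset_iff]
  calc _ = q / (n * p) * ∑ i, ∑ S ∈ (Nbhd i).powerset.filter (fun S => #S ≤ β),
        c i S * ∑ t ∈ range (β + 1), hcoef β q t * ∑ ω, w ω * (if S ⊆ Z t ω then 1 else 0) := by
        simp only [mul_sum]
        conv_lhs =>
          rw [sum_comm]
          enter [2, t]
          rw [sum_comm]
          enter [2, i]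
          rw [sum_comm]
        conv_lhs =>
          rw [sum_comm]
          enter [2, i]
          rw [sum_comm]
        exact sum_congr rfl fun i _ => sum_congr rfl fun S _ => sum_congr rfl fun t _ =>
          sum_congr rfl fun ω _ => by ring
    _ = _ := by
      congr 1
      refine sum_congr rfl fun i _ => ?_
      rw [sum_filter, sum_filter]
      refine sum_congr rfl fun S _ => ?_
      by_cases hSβ : #S ≤ β
      · rw [sum_hcoef_mul_sum_mul_ite_subset hUa hma hmU' hunif hSβ]
        simp [hSβ, ite_and]
      · simp [hSβ]

/-- conditional expectation of the two-stage estimator given a fixed Stage 1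
set `U ⊆ [n]` with `|U| = pn/q`, where at each time `t = 0,…,β` the treated set `Z t` is a
uniformly random subset of `U` of size `tpn/β` (units outside `U` untreated; arbitrary
joint coupling across `t`, modeled by an arbitrary finite probability space `(Ω, w)`).
Then `E[TTE-hat] = (q/(np)) Σ_i Σ_{∅ ≠ S ⊆ N_i, |S| ≤ β} c_{i,S} · 1(S ⊆ U)`. -/
theorem stmt_7 (β n : ℕ) (hβ : 1 ≤ β)
    (p q : ℝ) (hp0 : 0 < p) (hp1 : p ≤ 1) (hpq : p ≤ q) (hq1 : q ≤ 1)
    (Nbhd : Fin n → Finset (Fin n)) (c : Fin n → Finset (Fin n) → ℝ)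
    (U : Finset (Fin n)) (hU : (U.card : ℝ) = p * (n : ℝ) / q)
    (m : ℕ → ℕ) (hm : ∀ t, t ≤ β → (m t : ℝ) = (t : ℝ) * p * (n : ℝ) / (β : ℝ))
    (hmU : m β ≤ U.card)
    (Ω : Type) [Fintype Ω]
    (w : Ω → ℝ) (hw0 : ∀ ω, 0 ≤ w ω) (hw1 : ∑ ω, w ω = 1)
    (Z : ℕ → Ω → Finset (Fin n))
    (hZU : ∀ t, t ≤ β → ∀ ω, Z t ω ⊆ U)
    (hZcard : ∀ t, t ≤ β → ∀ ω, (Z t ω).card = m t)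
    (hZunif : ∀ t, t ≤ β → ∀ A : Finset (Fin n), A ⊆ U → A.card = m t →
      (∑ ω ∈ Finset.univ.filter (fun ω => Z t ω = A), w ω) = 1 / (U.card.choose (m t) : ℝ)) :
    (∑ ω, w ω * ((q / ((n : ℝ) * p)) * ∑ t ∈ Finset.range (β + 1), hcoef β q t *
        ∑ i, ∑ S ∈ (Nbhd i).powerset.filter (fun S => S.card ≤ β),
          c i S * ∏ j ∈ S, (if j ∈ Z t ω then (1 : ℝ) else 0))) =
      (q / ((n : ℝ) * p)) *
        ∑ i, ∑ S ∈ (Nbhd i).powerset.filter (fun S => S.Nonempty ∧ S.card ≤ β),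
          c i S * (if S ⊆ U then (1 : ℝ) else 0) :=
  stmt_7_general β n hβ p q Nbhd c U hU m hm hmU Ω w Z hZU hZcard hZunif
end

section
/- Fix integers β ≥ 1 and n, and reals p ∈ (0,1], q ∈ [p,1] such that pn/q and tpn/β (for t = 0,…,β) are integers. Suppose Stage 1 draws a random subset U ⊆ [n] with |U| = pn/q according to an arbitrary probability distribution on size-(pn/q) subsets, and Stage 2, conditional on U, assigns each z^t to have its set of treated units be a uniformly random subset of U of size tpn/β (units outside U untreated; coupling across t arbitrary). Then E[ TTE-hat ] − TTE = (1/n) Σ_{i=1}^{n} Σ_{∅ ≠ S ⊆ N_i, |S| ≤ β} c_{i,S} · ( (q/p)·P(S ⊆ U) − 1 ). -/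
open Finset Polynomial

lemma eval_basis_eq (β t : ℕ) (x : ℝ) :
    Polynomial.eval x (Lagrange.basis (Finset.range (β+1)) (Nat.cast : ℕ → ℝ) t) =
      ∏ s ∈ (Finset.range (β + 1)).erase t, ((x - (s : ℝ)) / ((t : ℝ) - (s : ℝ))) := by
  rw [Lagrange.basis, Polynomial.eval_prod]
  refine Finset.prod_congr rfl (fun j hj => ?_)
  have hne : (t : ℝ) ≠ (j : ℝ) :=
    Nat.cast_injective.ne (Finset.ne_of_mem_erase hj).symm
  rw [Lagrange.basisDivisor, Polynomial.eval_mul, Polynomial.eval_C, Polynomial.eval_sub,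
    Polynomial.eval_X, Polynomial.eval_C, div_eq_inv_mul]

lemma lagrange_sum (β : ℕ) (q : ℝ) (hq : q ≠ 0) (f : ℝ[X]) (hf : f.degree < β + 1) :
    ∑ t ∈ Finset.range (β + 1), hcoef β q t * Polynomial.eval (t : ℝ) f =
      Polynomial.eval ((β : ℝ) / q) f - Polynomial.eval 0 f := by
  have hinj : Set.InjOn (Nat.cast : ℕ → ℝ) (Finset.range (β+1)) :=
    fun a _ b _ h => Nat.cast_injective h
  have hdeg : f.degree < (Finset.range (β+1)).card := by
    rwa [Finset.card_range, Nat.cast_add, Nat.cast_one] at *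
  have hrepr := Lagrange.eq_interpolate hinj hdeg
  have heval : ∀ x : ℝ, Polynomial.eval x f =
      ∑ t ∈ Finset.range (β+1), Polynomial.eval (t : ℝ) f *
        Polynomial.eval x (Lagrange.basis (Finset.range (β+1)) (Nat.cast : ℕ → ℝ) t) := by
    intro x
    conv_lhs => rw [hrepr]
    rw [Lagrange.interpolate]
    simp [Polynomial.eval_finset_sum]
  rw [heval ((β:ℝ)/q), heval 0, ← Finset.sum_sub_distrib]
  refine Finset.sum_congr rfl (fun t ht => ?_)
  rw [hcoef, eval_basis_eq, eval_basis_eq]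
  have h0 : (∏ s ∈ (Finset.range (β + 1)).erase t, (((0:ℝ) - (s : ℝ)) / ((t : ℝ) - (s : ℝ)))) =
      ∏ s ∈ (Finset.range (β + 1)).erase t, ((-(s : ℝ)) / ((t : ℝ) - (s : ℝ))) :=
    Finset.prod_congr rfl (fun j _ => by rw [zero_sub])
  rw [h0]; ring

lemma nat_id : ∀ (a m u : ℕ), a ≤ m → m ≤ u →
    (u - a).choose (m - a) * u.descFactorial a = u.choose m * m.descFactorial a := by
  intro a
  induction a with
  | zero => intro m u _ _; simp
  | succ a ih =>
    intro m u ham hmu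
    have ha : a ≤ m := Nat.le_of_succ_le ham
    have ham' : a < m := ham
    have hau : a < u := lt_of_lt_of_le ham' hmu
    rw [Nat.descFactorial_succ, Nat.descFactorial_succ]
    have key : (u - a) * (u - (a+1)).choose (m - (a+1)) = (u - a).choose (m - a) * (m - a) := by
      have h1 : u - a = (u - (a+1)) + 1 := by omega
      have h2 : m - a = (m - (a+1)) + 1 := by omega
      rw [h1, h2]
      exact Nat.add_one_mul_choose_eq (u - (a+1)) (m - (a+1))
    calc (u - (a+1)).choose (m - (a+1)) * ((u - a) * u.descFactorial a)
        = ((u - a) * (u - (a+1)).choose (m - (a+1))) * u.descFactorial a := by ring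
      _ = ((u - a).choose (m - a) * (m - a)) * u.descFactorial a := by rw [key]
      _ = (m - a) * ((u - a).choose (m - a) * u.descFactorial a) := by ring
      _ = (m - a) * (u.choose m * m.descFactorial a) := by rw [ih m u ha hmu]
      _ = u.choose m * ((m - a) * m.descFactorial a) := by ring

lemma cast_desc (a m : ℕ) (ham : a ≤ m) :
    ((m.descFactorial a : ℕ) : ℝ) = ∏ k ∈ Finset.range a, ((m : ℝ) - (k : ℝ)) := by
  rw [Nat.descFactorial_eq_prod_range, Nat.cast_prod]
  refine Finset.prod_congr rfl (fun k hk => ?_)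
  have : k ≤ m := le_trans (le_of_lt (Finset.mem_range.mp hk)) ham
  rw [Nat.cast_sub this]

lemma ratio_eq (a mm u : ℕ) (ham : a ≤ mm) (hmu : mm ≤ u) :
    ((u - a).choose (mm - a) : ℝ) / (u.choose mm : ℝ) =
      ∏ k ∈ Finset.range a, (((mm : ℝ) - k) / ((u : ℝ) - k)) := by
  have hau : a ≤ u := le_trans ham hmu
  have hD : (∏ k ∈ Finset.range a, ((u : ℝ) - k)) ≠ 0 := by
    refine Finset.prod_ne_zero_iff.mpr (fun k hk => ?_)
    have : k < u := lt_of_lt_of_le (Finset.mem_range.mp hk) hau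
    have : (k : ℝ) < (u : ℝ) := by exact_mod_cast this
    linarith
  have hC : (u.choose mm : ℝ) ≠ 0 := by
    have := Nat.choose_pos hmu
    positivity
  rw [Finset.prod_div_distrib, ← cast_desc a mm ham, ← cast_desc a u hau]
  have hdu : ((u.descFactorial a : ℕ) : ℝ) ≠ 0 := by
    rw [cast_desc a u hau]; exact hD
  rw [div_eq_div_iff hC hdu]
  push_cast
  rw [mul_comm ((mm.descFactorial a : ℝ)) _]
  exact_mod_cast nat_id a mm u ham hmu

lemma count_supersets {n : ℕ} (S V : Finset (Fin n)) (hSV : S ⊆ V) (mm : ℕ) (hm : S.card ≤ mm) :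
    (Finset.univ.filter (fun B => S ⊆ B ∧ B ⊆ V ∧ B.card = mm)).card =
      (V.card - S.card).choose (mm - S.card) := by
  rw [← Finset.card_sdiff_of_subset hSV, ← Finset.card_powersetCard (mm - S.card) (V \ S)]
  refine Finset.card_bij' (fun B _ => B \ S) (fun C _ => C ∪ S) ?_ ?_ ?_ ?_
  · intro B hB
    simp only [Finset.mem_filter, Finset.mem_univ, true_and] at hB
    obtain ⟨h1, h2, h3⟩ := hB
    rw [Finset.mem_powersetCard]
    exact ⟨Finset.sdiff_subset_sdiff h2 le_rfl, by rw [Finset.card_sdiff_of_subset h1, h3]⟩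
  · intro C hC
    rw [Finset.mem_powersetCard] at hC
    obtain ⟨h1, h2⟩ := hC
    have hCS : Disjoint C S := Finset.disjoint_of_subset_left h1 (Finset.sdiff_disjoint)
    simp only [Finset.mem_filter, Finset.mem_univ, true_and]
    refine ⟨Finset.subset_union_right, Finset.union_subset (le_trans h1 Finset.sdiff_subset) hSV, ?_⟩
    rw [Finset.card_union_of_disjoint hCS, h2]
    omega
  · intro B hB
    simp only [Finset.mem_filter, Finset.mem_univ, true_and] at hB
    exact Finset.sdiff_union_of_subset hB.1
  · intro C hC
    rw [Finset.mem_powersetCard] at hC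
    have hCS : Disjoint C S := Finset.disjoint_of_subset_left hC.1 (Finset.sdiff_disjoint)
    rw [Finset.union_sdiff_right, Finset.sdiff_eq_self_of_disjoint hCS]

lemma key_lemma (β n : ℕ) (hβ : 1 ≤ β)
    (p q : ℝ) (hp0 : 0 < p) (hpq : p ≤ q)
    (u : ℕ) (hu : (u : ℝ) = p * (n : ℝ) / q)
    (m : ℕ → ℕ) (hm : ∀ t, t ≤ β → (m t : ℝ) = (t : ℝ) * p * (n : ℝ) / (β : ℝ))
    (hmu : m β ≤ u)
    (Ω : Type) [Fintype Ω] (w : Ω → ℝ)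
    (U : Ω → Finset (Fin n)) (hUcard : ∀ ω, (U ω).card = u)
    (Z : ℕ → Ω → Finset (Fin n))
    (hZU : ∀ t, t ≤ β → ∀ ω, Z t ω ⊆ U ω)
    (hZcard : ∀ t, t ≤ β → ∀ ω, (Z t ω).card = m t)
    (hZunif : ∀ t, t ≤ β → ∀ V A : Finset (Fin n), A ⊆ V → A.card = m t →
      (∑ ω ∈ Finset.univ.filter (fun ω => U ω = V ∧ Z t ω = A), w ω) =
        (1 / (u.choose (m t) : ℝ)) * ∑ ω ∈ Finset.univ.filter (fun ω => U ω = V), w ω)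
    (S : Finset (Fin n)) (hS : S.card ≤ β) :
    ∑ t ∈ Finset.range (β + 1), hcoef β q t *
        (∑ ω ∈ Finset.univ.filter (fun ω => S ⊆ Z t ω), w ω) =
      if S.Nonempty then (∑ ω ∈ Finset.univ.filter (fun ω => S ⊆ U ω), w ω) else 0 := by
  have hq0 : 0 < q := lt_of_lt_of_le hp0 hpq
  have hβR : (0:ℝ) < (β:ℝ) := by exact_mod_cast hβ
  have hmt : ∀ t, t ≤ β → m t ≤ u := by
    intro t ht
    refine le_trans ?_ hmu
    have h1 : (m t : ℝ) ≤ (m β : ℝ) := by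
      rw [hm t ht, hm β le_rfl]
      have htβ : (t:ℝ) ≤ (β:ℝ) := by exact_mod_cast ht
      gcongr
    exact_mod_cast h1
  rcases lt_or_ge u S.card with hau | hau
  · -- u < S.card : everything vanishes
    have hPZ0 : ∀ t ∈ Finset.range (β+1),
        (∑ ω ∈ Finset.univ.filter (fun ω => S ⊆ Z t ω), w ω) = 0 := by
      intro t ht
      have ht' : t ≤ β := Nat.lt_succ_iff.mp (Finset.mem_range.mp ht)
      rw [Finset.filter_false_of_mem, Finset.sum_empty]
      intro ω _ hsub
      have h1 : S.card ≤ m t := by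
        rw [← hZcard t ht' ω]; exact Finset.card_le_card hsub
      have := hmt t ht'
      omega
    have hPU0 : (∑ ω ∈ Finset.univ.filter (fun ω => S ⊆ U ω), w ω) = 0 := by
      rw [Finset.filter_false_of_mem, Finset.sum_empty]
      intro ω _ hsub
      have h1 : S.card ≤ u := by rw [← hUcard ω]; exact Finset.card_le_card hsub
      omega
    rw [Finset.sum_congr rfl (fun t ht => by rw [hPZ0 t ht, mul_zero]),
      Finset.sum_const_zero, hPU0, ite_self]
  · -- S.card ≤ u
    set a := S.card with ha
    set PU := ∑ ω ∈ Finset.univ.filter (fun ω => S ⊆ U ω), w ω with hPUdef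
    have hPUfib : PU = ∑ V : Finset (Fin n),
        (if S ⊆ V then (∑ ω ∈ Finset.univ.filter (fun ω => U ω = V), w ω) else 0) := by
      rw [hPUdef, ← Finset.sum_fiberwise (Finset.univ.filter (fun ω => S ⊆ U ω)) U w]
      refine Finset.sum_congr rfl (fun V _ => ?_)
      rw [Finset.filter_filter]
      by_cases hSV : S ⊆ V
      · rw [if_pos hSV]
        refine Finset.sum_congr (Finset.filter_congr (fun ω _ => ?_)) (fun _ _ => rfl)
        constructor
        · rintro ⟨_, h2⟩; exact h2
        · intro h2; exact ⟨h2 ▸ hSV, h2⟩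
      · rw [if_neg hSV, Finset.filter_false_of_mem, Finset.sum_empty]
        rintro ω _ ⟨h1, h2⟩; exact hSV (h2 ▸ h1)
    have hPZ : ∀ t, t ≤ β →
        (∑ ω ∈ Finset.univ.filter (fun ω => S ⊆ Z t ω), w ω)
          = (∏ k ∈ Finset.range a, (((m t : ℝ) - k) / ((u : ℝ) - k))) * PU := by
      intro t ht
      set R := ∏ k ∈ Finset.range a, (((m t : ℝ) - k) / ((u : ℝ) - k)) with hR
      have step1 : (∑ ω ∈ Finset.univ.filter (fun ω => S ⊆ Z t ω), w ω)
          = ∑ V : Finset (Fin n), ∑ B : Finset (Fin n),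
              ∑ ω ∈ Finset.univ.filter (fun ω => (S ⊆ Z t ω ∧ U ω = V) ∧ Z t ω = B), w ω := by
        rw [← Finset.sum_fiberwise (Finset.univ.filter (fun ω => S ⊆ Z t ω)) U w]
        refine Finset.sum_congr rfl (fun V _ => ?_)
        rw [Finset.filter_filter,
          ← Finset.sum_fiberwise (Finset.univ.filter (fun ω => S ⊆ Z t ω ∧ U ω = V)) (Z t) w]
        exact Finset.sum_congr rfl (fun B _ => by rw [Finset.filter_filter])
      have step2 : ∀ V B : Finset (Fin n),
          (∑ ω ∈ Finset.univ.filter (fun ω => (S ⊆ Z t ω ∧ U ω = V) ∧ Z t ω = B), w ω)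
            = if S ⊆ B ∧ B ⊆ V ∧ B.card = m t
              then (1 / (u.choose (m t) : ℝ)) *
                ∑ ω ∈ Finset.univ.filter (fun ω => U ω = V), w ω
              else 0 := by
        intro V B
        by_cases hcond : S ⊆ B ∧ B ⊆ V ∧ B.card = m t
        · rw [if_pos hcond, ← hZunif t ht V B hcond.2.1 hcond.2.2]
          refine Finset.sum_congr (Finset.filter_congr (fun ω _ => ?_)) (fun _ _ => rfl)
          constructor
          · rintro ⟨⟨_, h2⟩, h3⟩; exact ⟨h2, h3⟩
          · rintro ⟨h2, h3⟩; exact ⟨⟨h3 ▸ hcond.1, h2⟩, h3⟩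
        · rw [if_neg hcond, Finset.filter_false_of_mem, Finset.sum_empty]
          rintro ω _ ⟨⟨h1, h2⟩, h3⟩
          refine hcond ⟨h3 ▸ h1, ?_, h3 ▸ hZcard t ht ω⟩
          rw [← h3, ← h2]; exact hZU t ht ω
      have step4 : ∀ V : Finset (Fin n),
          ((Finset.univ.filter (fun B => S ⊆ B ∧ B ⊆ V ∧ B.card = m t)).card : ℝ) *
            ((1 / (u.choose (m t) : ℝ)) * ∑ ω ∈ Finset.univ.filter (fun ω => U ω = V), w ω)
          = R * (if S ⊆ V then (∑ ω ∈ Finset.univ.filter (fun ω => U ω = V), w ω) else 0) := by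
        intro V
        by_cases hSV : S ⊆ V
        · rw [if_pos hSV]
          by_cases hPV : (∑ ω ∈ Finset.univ.filter (fun ω => U ω = V), w ω) = 0
          · rw [hPV]; ring
          · have hVcard : V.card = u := by
              have hne : (Finset.univ.filter (fun ω => U ω = V)).Nonempty := by
                by_contra h
                rw [Finset.not_nonempty_iff_eq_empty] at h
                exact hPV (by rw [h, Finset.sum_empty])
              obtain ⟨ω, hω⟩ := hne
              rw [← (Finset.mem_filter.mp hω).2, hUcard ω]
            rcases le_or_gt a (m t) with ham | ham
            · rw [count_supersets S V hSV (m t) ham, hVcard, ← mul_assoc, mul_one_div,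
                ratio_eq a (m t) u ham (hmt t ht), ← hR]
            · have hcnt : (Finset.univ.filter (fun B => S ⊆ B ∧ B ⊆ V ∧ B.card = m t)) = ∅ := by
                refine Finset.filter_eq_empty_iff.mpr (fun B _ => ?_)
                rintro ⟨h1, _, h3⟩
                have := Finset.card_le_card h1
                omega
              have hR0 : R = 0 := by
                refine Finset.prod_eq_zero (Finset.mem_range.mpr ham) ?_
                rw [sub_self, zero_div]
              rw [hcnt, hR0]; simp
        · have hcnt : (Finset.univ.filter (fun B => S ⊆ B ∧ B ⊆ V ∧ B.card = m t)) = ∅ := by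
            refine Finset.filter_eq_empty_iff.mpr (fun B _ => ?_)
            rintro ⟨h1, h2, _⟩
            exact hSV (le_trans h1 h2)
          rw [hcnt, if_neg hSV]; simp
      calc (∑ ω ∈ Finset.univ.filter (fun ω => S ⊆ Z t ω), w ω)
          = ∑ V : Finset (Fin n), ∑ B : Finset (Fin n),
              ∑ ω ∈ Finset.univ.filter (fun ω => (S ⊆ Z t ω ∧ U ω = V) ∧ Z t ω = B), w ω := step1
        _ = ∑ V : Finset (Fin n),
              ((Finset.univ.filter (fun B => S ⊆ B ∧ B ⊆ V ∧ B.card = m t)).card : ℝ) *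
                ((1 / (u.choose (m t) : ℝ)) *
                  ∑ ω ∈ Finset.univ.filter (fun ω => U ω = V), w ω) := by
            refine Finset.sum_congr rfl (fun V _ => ?_)
            rw [Finset.sum_congr rfl (fun B _ => step2 V B), ← Finset.sum_filter,
              Finset.sum_const, nsmul_eq_mul]
        _ = ∑ V : Finset (Fin n),
              R * (if S ⊆ V then (∑ ω ∈ Finset.univ.filter (fun ω => U ω = V), w ω) else 0) :=
            Finset.sum_congr rfl (fun V _ => step4 V)
        _ = R * PU := by rw [← Finset.mul_sum, hPUfib]
    -- Lagrange part
    set f : ℝ[X] := ∏ k ∈ Finset.range a, (Polynomial.C (p * (n:ℝ) / (β:ℝ)) * Polynomial.X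
        - Polynomial.C (k : ℝ)) with hf
    set D : ℝ := ∏ k ∈ Finset.range a, ((u : ℝ) - k) with hD
    have hDne : D ≠ 0 := by
      rw [hD]
      refine Finset.prod_ne_zero_iff.mpr (fun k hk => ?_)
      have h1 : k < u := lt_of_lt_of_le (Finset.mem_range.mp hk) hau
      have h2 : (k : ℝ) < (u : ℝ) := by exact_mod_cast h1
      linarith
    have hfeval : ∀ t : ℕ, t ≤ β →
        Polynomial.eval (t : ℝ) f = ∏ k ∈ Finset.range a, ((m t : ℝ) - k) := by
      intro t ht
      rw [hf, Polynomial.eval_prod]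
      refine Finset.prod_congr rfl (fun k _ => ?_)
      simp only [Polynomial.eval_sub, Polynomial.eval_mul, Polynomial.eval_C, Polynomial.eval_X]
      rw [hm t ht]; ring
    have hdeg : f.degree < (β : WithBot ℕ) + 1 := by
      have hle : f.degree ≤ (a : WithBot ℕ) := by
        rw [hf]
        refine le_trans (Polynomial.degree_prod_le _ _) ?_
        refine le_trans (Finset.sum_le_sum (g := fun _ => (1 : WithBot ℕ)) (fun k _ =>
          le_trans (Polynomial.degree_sub_le _ _)
            (max_le (Polynomial.degree_C_mul_X_le _)
              (le_trans Polynomial.degree_C_le (by norm_num))))) ?_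
        rw [Finset.sum_const, Finset.card_range, nsmul_eq_mul, mul_one]
      refine lt_of_le_of_lt hle ?_
      have h1 : (a : WithBot ℕ) ≤ (β : WithBot ℕ) := by exact_mod_cast hS
      have h2 : (β : WithBot ℕ) < (β : WithBot ℕ) + 1 := by
        exact_mod_cast Nat.lt_succ_self β
      exact lt_of_le_of_lt h1 h2
    have hlag := lagrange_sum β q (ne_of_gt hq0) f hdeg
    have hfu : Polynomial.eval ((β : ℝ) / q) f = D := by
      rw [hf, hD, Polynomial.eval_prod]
      refine Finset.prod_congr rfl (fun k _ => ?_)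
      simp only [Polynomial.eval_sub, Polynomial.eval_mul, Polynomial.eval_C, Polynomial.eval_X]
      rw [hu]
      congr 1
      field_simp
    have hratio : ∀ t, t ≤ β →
        (∏ k ∈ Finset.range a, (((m t : ℝ) - k) / ((u : ℝ) - k)))
          = Polynomial.eval (t : ℝ) f / D := by
      intro t ht
      rw [Finset.prod_div_distrib, hfeval t ht, hD]
    calc ∑ t ∈ Finset.range (β + 1), hcoef β q t *
          (∑ ω ∈ Finset.univ.filter (fun ω => S ⊆ Z t ω), w ω)
        = ∑ t ∈ Finset.range (β + 1), hcoef β q t *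
            (Polynomial.eval (t : ℝ) f / D * PU) := by
          refine Finset.sum_congr rfl (fun t ht => ?_)
          have ht' := Nat.lt_succ_iff.mp (Finset.mem_range.mp ht)
          rw [hPZ t ht', hratio t ht']
      _ = (∑ t ∈ Finset.range (β + 1), hcoef β q t * Polynomial.eval (t : ℝ) f) / D * PU := by
          rw [Finset.sum_div, Finset.sum_mul]
          exact Finset.sum_congr rfl (fun t _ => by ring)
      _ = (D - Polynomial.eval 0 f) / D * PU := by rw [hlag, hfu]
      _ = if S.Nonempty then PU else 0 := by
          by_cases hSne : S.Nonempty
          · have he0 : Polynomial.eval 0 f = 0 := by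
              rw [hf, Polynomial.eval_prod]
              refine Finset.prod_eq_zero (Finset.mem_range.mpr (Finset.card_pos.mpr hSne)) ?_
              simp
            rw [if_pos hSne, he0, sub_zero, div_self hDne, one_mul]
          · have ha0 : a = 0 := by
              rw [ha, Finset.card_eq_zero.mpr (Finset.not_nonempty_iff_eq_empty.mp hSne)]
            have hf1 : f = 1 := by rw [hf, ha0, Finset.range_zero, Finset.prod_empty]
            have hD1 : D = 1 := by rw [hD, ha0, Finset.range_zero, Finset.prod_empty]
            rw [if_neg hSne, hf1, Polynomial.eval_one, hD1]
            norm_num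

lemma prod_ind {n : ℕ} (S Zs : Finset (Fin n)) :
    (∏ j ∈ S, if j ∈ Zs then (1 : ℝ) else 0) = if S ⊆ Zs then 1 else 0 := by
  by_cases h : S ⊆ Zs
  · rw [if_pos h]; exact Finset.prod_eq_one (fun j hj => if_pos (h hj))
  · rw [if_neg h]
    obtain ⟨j, hjS, hjZ⟩ := Finset.not_subset.mp h
    exact Finset.prod_eq_zero hjS (if_neg hjZ)

/-- bias of the two-stage estimator. Stage 1 draws a random subset
`U ⊆ [n]` of size `pn/q` by an arbitrary distribution; Stage 2, conditional on `U`,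
assigns each `Z t` to be a uniformly random subset of `U` of size `tpn/β` (units outside
`U` untreated; coupling across `t` arbitrary). All randomness is modeled by an arbitrary
finite probability space `(Ω, w)`. Then
`E[TTE-hat] − TTE = (1/n) Σ_i Σ_{∅ ≠ S ⊆ N_i, |S| ≤ β} c_{i,S}·((q/p)·P(S ⊆ U) − 1)`. -/
theorem stmt_8 (β n : ℕ) (hβ : 1 ≤ β)
    (p q : ℝ) (hp0 : 0 < p) (hp1 : p ≤ 1) (hpq : p ≤ q) (hq1 : q ≤ 1)
    (Nbhd : Fin n → Finset (Fin n)) (c : Fin n → Finset (Fin n) → ℝ)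
    (u : ℕ) (hu : (u : ℝ) = p * (n : ℝ) / q)
    (m : ℕ → ℕ) (hm : ∀ t, t ≤ β → (m t : ℝ) = (t : ℝ) * p * (n : ℝ) / (β : ℝ))
    (hmu : m β ≤ u)
    (Ω : Type) [Fintype Ω]
    (w : Ω → ℝ) (hw0 : ∀ ω, 0 ≤ w ω) (hw1 : ∑ ω, w ω = 1)
    (U : Ω → Finset (Fin n)) (hUcard : ∀ ω, (U ω).card = u)
    (Z : ℕ → Ω → Finset (Fin n))
    (hZU : ∀ t, t ≤ β → ∀ ω, Z t ω ⊆ U ω)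
    (hZcard : ∀ t, t ≤ β → ∀ ω, (Z t ω).card = m t)
    (hZunif : ∀ t, t ≤ β → ∀ V A : Finset (Fin n), A ⊆ V → A.card = m t →
      (∑ ω ∈ Finset.univ.filter (fun ω => U ω = V ∧ Z t ω = A), w ω) =
        (1 / (u.choose (m t) : ℝ)) * ∑ ω ∈ Finset.univ.filter (fun ω => U ω = V), w ω) :
    (∑ ω, w ω * ((q / ((n : ℝ) * p)) * ∑ t ∈ Finset.range (β + 1), hcoef β q t *
        ∑ i, ∑ S ∈ (Nbhd i).powerset.filter (fun S => S.card ≤ β),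
          c i S * ∏ j ∈ S, (if j ∈ Z t ω then (1 : ℝ) else 0))) -
      (1 / (n : ℝ)) * (∑ i, ∑ S ∈ (Nbhd i).powerset.filter
          (fun S => S.Nonempty ∧ S.card ≤ β), c i S) =
      (1 / (n : ℝ)) *
        ∑ i, ∑ S ∈ (Nbhd i).powerset.filter (fun S => S.Nonempty ∧ S.card ≤ β),
          c i S * ((q / p) * (∑ ω ∈ Finset.univ.filter (fun ω => S ⊆ U ω), w ω) - 1) := by
  have hfilter : ∀ i : Fin n,
      (((Nbhd i).powerset.filter (fun S => S.card ≤ β)).filter (fun S => S.Nonempty))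
        = (Nbhd i).powerset.filter (fun S => S.Nonempty ∧ S.card ≤ β) := by
    intro i
    rw [Finset.filter_filter]
    exact Finset.filter_congr (fun S _ => by tauto)
  have step : (∑ ω, w ω * ((q / ((n : ℝ) * p)) * ∑ t ∈ Finset.range (β + 1), hcoef β q t *
        ∑ i, ∑ S ∈ (Nbhd i).powerset.filter (fun S => S.card ≤ β),
          c i S * ∏ j ∈ S, (if j ∈ Z t ω then (1 : ℝ) else 0)))
      = ∑ i, ∑ S ∈ (Nbhd i).powerset.filter (fun S => S.card ≤ β),
          (q / ((n : ℝ) * p)) * (c i S *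
            ∑ t ∈ Finset.range (β + 1), hcoef β q t *
              (∑ ω ∈ Finset.univ.filter (fun ω => S ⊆ Z t ω), w ω)) := by
    calc (∑ ω, w ω * ((q / ((n : ℝ) * p)) * ∑ t ∈ Finset.range (β + 1), hcoef β q t *
            ∑ i, ∑ S ∈ (Nbhd i).powerset.filter (fun S => S.card ≤ β),
              c i S * ∏ j ∈ S, (if j ∈ Z t ω then (1 : ℝ) else 0)))
        = ∑ ω : Ω, ∑ t ∈ Finset.range (β + 1), ∑ i : Fin n,
            ∑ S ∈ (Nbhd i).powerset.filter (fun S => S.card ≤ β),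
              (q / ((n : ℝ) * p)) * (hcoef β q t * (c i S *
                (w ω * (if S ⊆ Z t ω then (1 : ℝ) else 0)))) := by
          refine Finset.sum_congr rfl (fun ω _ => ?_)
          simp_rw [prod_ind, Finset.mul_sum]
          refine Finset.sum_congr rfl (fun t _ => Finset.sum_congr rfl (fun i _ =>
            Finset.sum_congr rfl (fun S _ => by ring)))
      _ = ∑ t ∈ Finset.range (β + 1), ∑ ω : Ω, ∑ i : Fin n,
            ∑ S ∈ (Nbhd i).powerset.filter (fun S => S.card ≤ β),
              (q / ((n : ℝ) * p)) * (hcoef β q t * (c i S *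
                (w ω * (if S ⊆ Z t ω then (1 : ℝ) else 0)))) := Finset.sum_comm
      _ = ∑ t ∈ Finset.range (β + 1), ∑ i : Fin n, ∑ ω : Ω,
            ∑ S ∈ (Nbhd i).powerset.filter (fun S => S.card ≤ β),
              (q / ((n : ℝ) * p)) * (hcoef β q t * (c i S *
                (w ω * (if S ⊆ Z t ω then (1 : ℝ) else 0)))) :=
          Finset.sum_congr rfl (fun t _ => Finset.sum_comm)
      _ = ∑ t ∈ Finset.range (β + 1), ∑ i : Fin n,
            ∑ S ∈ (Nbhd i).powerset.filter (fun S => S.card ≤ β), ∑ ω : Ω,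
              (q / ((n : ℝ) * p)) * (hcoef β q t * (c i S *
                (w ω * (if S ⊆ Z t ω then (1 : ℝ) else 0)))) :=
          Finset.sum_congr rfl (fun t _ => Finset.sum_congr rfl (fun i _ => Finset.sum_comm))
      _ = ∑ i : Fin n, ∑ t ∈ Finset.range (β + 1),
            ∑ S ∈ (Nbhd i).powerset.filter (fun S => S.card ≤ β), ∑ ω : Ω,
              (q / ((n : ℝ) * p)) * (hcoef β q t * (c i S *
                (w ω * (if S ⊆ Z t ω then (1 : ℝ) else 0)))) := Finset.sum_comm
      _ = ∑ i : Fin n, ∑ S ∈ (Nbhd i).powerset.filter (fun S => S.card ≤ β),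
            ∑ t ∈ Finset.range (β + 1), ∑ ω : Ω,
              (q / ((n : ℝ) * p)) * (hcoef β q t * (c i S *
                (w ω * (if S ⊆ Z t ω then (1 : ℝ) else 0)))) :=
          Finset.sum_congr rfl (fun i _ => Finset.sum_comm)
      _ = ∑ i, ∑ S ∈ (Nbhd i).powerset.filter (fun S => S.card ≤ β),
            (q / ((n : ℝ) * p)) * (c i S *
              ∑ t ∈ Finset.range (β + 1), hcoef β q t *
                (∑ ω ∈ Finset.univ.filter (fun ω => S ⊆ Z t ω), w ω)) := by
          refine Finset.sum_congr rfl (fun i _ => Finset.sum_congr rfl (fun S _ => ?_))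
          simp_rw [Finset.sum_filter, Finset.mul_sum]
          refine Finset.sum_congr rfl (fun t _ => Finset.sum_congr rfl (fun ω _ => ?_))
          by_cases h : S ⊆ Z t ω
          · rw [if_pos h, if_pos h]; ring
          · rw [if_neg h, if_neg h]; ring
  rw [step]
  have step2 : ∀ i : Fin n, ∑ S ∈ (Nbhd i).powerset.filter (fun S => S.card ≤ β),
        (q / ((n : ℝ) * p)) * (c i S *
          ∑ t ∈ Finset.range (β + 1), hcoef β q t *
            (∑ ω ∈ Finset.univ.filter (fun ω => S ⊆ Z t ω), w ω))
      = ∑ S ∈ (Nbhd i).powerset.filter (fun S => S.Nonempty ∧ S.card ≤ β),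
          (q / ((n : ℝ) * p)) * (c i S *
            (∑ ω ∈ Finset.univ.filter (fun ω => S ⊆ U ω), w ω)) := by
    intro i
    conv_rhs => rw [← hfilter i, Finset.sum_filter]
    refine Finset.sum_congr rfl (fun S hS => ?_)
    have hScard : S.card ≤ β := (Finset.mem_filter.mp hS).2
    rw [key_lemma β n hβ p q hp0 hpq u hu m hm hmu Ω w U hUcard Z hZU hZcard hZunif S hScard]
    by_cases h : S.Nonempty
    · rw [if_pos h, if_pos h]
    · rw [if_neg h, if_neg h, mul_zero, mul_zero]
  rw [Finset.sum_congr rfl (fun i _ => step2 i)]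
  have hK : q / ((n : ℝ) * p) = (1 / (n : ℝ)) * (q / p) := by
    rw [div_mul_div_comm, one_mul]
  rw [Finset.mul_sum, Finset.mul_sum, ← Finset.sum_sub_distrib]
  refine Finset.sum_congr rfl (fun i _ => ?_)
  rw [Finset.mul_sum, Finset.mul_sum, ← Finset.sum_sub_distrib]
  refine Finset.sum_congr rfl (fun S _ => ?_)
  rw [hK]; ring
end

section
/- Let Π be a partition of [n] into clusters, and for S ⊆ [n] let Π(S) denote the set of clusters of Π intersecting S. In a β-order potential outcomes model, the cut effect satisfies the identity C(δ(Π)) = TTE − (1/n_c) Σ_{π ∈ Π} L̄_π, where n_c is the number of clusters. -/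
open Finset

lemma key_ind {n : ℕ} (S : Finset (Fin n)) (hS : S.Nonempty)
    (Cl : Finset (Finset (Fin n)))
    (hdisj : ∀ π ∈ Cl, ∀ π' ∈ Cl, π ≠ π' → Disjoint π π')
    (hcover : ∀ i : Fin n, ∃ π ∈ Cl, i ∈ π) :
    (if 2 ≤ (Cl.filter (fun π => (S ∩ π).Nonempty)).card then (1 : ℝ) else 0)
      = 1 - ∑ π ∈ Cl, (if S ⊆ π then (1 : ℝ) else 0) := by
  have hsum : ∑ π ∈ Cl, (if S ⊆ π then (1:ℝ) else 0)
      = ((Cl.filter (fun π => S ⊆ π)).card : ℝ) := by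
    simp [Finset.sum_boole]
  rw [hsum]
  set F := Cl.filter (fun π => (S ∩ π).Nonempty) with hF
  set G := Cl.filter (fun π => S ⊆ π) with hG
  obtain ⟨j, hj⟩ := hS
  obtain ⟨πj, hπj, hjπj⟩ := hcover j
  have hFne : F.Nonempty := ⟨πj, by simp [hF, Finset.mem_filter, hπj]; exact ⟨j, by simp [hj, hjπj]⟩⟩
  -- if π ∈ G then F = {π}
  have hGF : ∀ π ∈ G, F = {π} := by
    intro π hπ
    rw [hG, Finset.mem_filter] at hπ
    obtain ⟨hπCl, hSπ⟩ := hπ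
    apply Finset.eq_singleton_iff_unique_mem.mpr
    constructor
    · rw [hF, Finset.mem_filter]
      exact ⟨hπCl, ⟨j, by simp [hj, hSπ hj]⟩⟩
    · intro π' hπ'
      rw [hF, Finset.mem_filter] at hπ'
      obtain ⟨hπ'Cl, k, hk⟩ := hπ'
      by_contra hne
      have hk' : k ∈ π' ∩ π := by
        simp only [Finset.mem_inter] at hk
        exact Finset.mem_inter.mpr ⟨hk.2, hSπ hk.1⟩
      exact absurd ((hdisj π' hπ'Cl π hπCl hne).le_bot hk') (by simp)
  by_cases h2 : 2 ≤ F.card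
  · -- G empty
    have hGe : G = ∅ := by
      by_contra hne
      obtain ⟨π, hπ⟩ := Finset.nonempty_iff_ne_empty.mpr hne
      have := hGF π hπ
      rw [this] at h2; simp at h2
    simp [h2, hGe]
  · have h1 : F.card = 1 := le_antisymm (by omega) (Finset.card_pos.mpr hFne)
    obtain ⟨π, hπ⟩ := Finset.card_eq_one.mp h1
    have hπCl : π ∈ Cl := by
      have : π ∈ F := hπ ▸ Finset.mem_singleton_self π
      exact (Finset.mem_filter.mp this).1
    have hSπ : S ⊆ π := by
      intro k hk
      obtain ⟨πk, hπkCl, hkπk⟩ := hcover k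
      have : πk ∈ F := by
        rw [hF, Finset.mem_filter]
        exact ⟨hπkCl, ⟨k, Finset.mem_inter.mpr ⟨hk, hkπk⟩⟩⟩
      rw [hπ, Finset.mem_singleton] at this
      exact this ▸ hkπk
    have hGe : G = {π} := by
      apply Finset.eq_singleton_iff_unique_mem.mpr
      refine ⟨Finset.mem_filter.mpr ⟨hπCl, hSπ⟩, ?_⟩
      intro π' hπ'
      rw [hG, Finset.mem_filter] at hπ'
      by_contra hne
      exact absurd ((hdisj π' hπ'.1 π hπCl hne).le_bot
        (Finset.mem_inter.mpr ⟨hπ'.2 hj, hSπ hj⟩)) (by simp)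
    simp [h2, hGe]


/-- for a partition `Cl` of `[n]` into `n_c` clusters, in a β-order
potential outcomes model the cut effect satisfies
`C(δ(Π)) = TTE − (1/n_c) Σ_{π ∈ Π} L̄_π`, where
`TTE = (1/n) Σ_i Σ_{∅ ≠ S ⊆ N_i, |S| ≤ β} c_{i,S}`,
`L̄_π = (n_c/n) Σ_i Σ_{∅ ≠ S ⊆ N_i, |S| ≤ β} c_{i,S}·1(S ⊆ π)`, and
`C(δ(Π)) = (1/n) Σ_i Σ_{S ⊆ N_i, |S| ≤ β} c_{i,S}·1(|Π(S)| ≥ 2)` with `Π(S)` the set of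
clusters intersecting `S`. -/
theorem stmt_11 (n β n_c : ℕ)
    (Nbhd : Fin n → Finset (Fin n)) (c : Fin n → Finset (Fin n) → ℝ)
    (Cl : Finset (Finset (Fin n))) (hClcard : Cl.card = n_c)
    (hdisj : ∀ π ∈ Cl, ∀ π' ∈ Cl, π ≠ π' → Disjoint π π')
    (hcover : ∀ i : Fin n, ∃ π ∈ Cl, i ∈ π) :
    (1 / (n : ℝ)) * ∑ i, ∑ S ∈ (Nbhd i).powerset.filter (fun S => S.card ≤ β),
        c i S * (if 2 ≤ (Cl.filter (fun π => (S ∩ π).Nonempty)).card then (1 : ℝ) else 0) =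
      (1 / (n : ℝ)) * (∑ i, ∑ S ∈ (Nbhd i).powerset.filter
          (fun S => S.Nonempty ∧ S.card ≤ β), c i S) -
        (1 / (n_c : ℝ)) * ∑ π ∈ Cl, ((n_c : ℝ) / (n : ℝ)) *
          ∑ i, ∑ S ∈ (Nbhd i).powerset.filter (fun S => S.Nonempty ∧ S.card ≤ β),
            c i S * (if S ⊆ π then (1 : ℝ) else 0) := by
  rcases Nat.eq_zero_or_pos n with hn | hn
  · subst hn
    simp
  have hnc : n_c ≠ 0 := by
    obtain ⟨π, hπ, _⟩ := hcover ⟨0, hn⟩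
    rw [← hClcard]
    exact Finset.card_ne_zero_of_mem hπ
  -- pull constants on RHS
  rw [← Finset.mul_sum, ← mul_assoc]
  have hconst : (1 / (n_c : ℝ)) * ((n_c : ℝ) / (n : ℝ)) = 1 / (n : ℝ) := by
    field_simp
  rw [hconst, ← mul_sub]
  congr 1
  -- LHS: restrict to nonempty S
  have hL : ∀ i : Fin n,
      ∑ S ∈ (Nbhd i).powerset.filter (fun S => S.card ≤ β),
        c i S * (if 2 ≤ (Cl.filter (fun π => (S ∩ π).Nonempty)).card then (1 : ℝ) else 0)
      = ∑ S ∈ (Nbhd i).powerset.filter (fun S => S.Nonempty ∧ S.card ≤ β),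
        c i S * (if 2 ≤ (Cl.filter (fun π => (S ∩ π).Nonempty)).card then (1 : ℝ) else 0) := by
    intro i
    rw [Finset.sum_filter, Finset.sum_filter]
    apply Finset.sum_congr rfl
    intro S _
    by_cases hSne : S.Nonempty
    · simp [hSne]
    · rw [Finset.not_nonempty_iff_eq_empty] at hSne
      subst hSne
      simp
  simp_rw [hL]
  -- swap the π-sum on the RHS
  rw [Finset.sum_comm]
  rw [← Finset.sum_sub_distrib]
  apply Finset.sum_congr rfl
  intro i _
  rw [Finset.sum_comm, ← Finset.sum_sub_distrib]
  apply Finset.sum_congr rfl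
  intro S hS
  rw [Finset.mem_filter] at hS
  rw [key_ind S hS.2.1 Cl hdisj hcover, mul_sub, mul_one, Finset.mul_sum]
end

section
/- Let Π be a partition of [n] into n_c clusters, let 1 ≤ k ≤ n_c be an integer, and let U be the union of a uniformly random set of k clusters of Π. If S, S' ⊆ [n] are subsets such that no cluster of Π intersects both S and S' (i.e. Π(S) ∩ Π(S') = ∅), then Cov( 1(S ⊆ U), 1(S' ⊆ U) ) ≤ 0. -/
open Finset

lemma count_subsets {α : Type*} [DecidableEq α] (s A : Finset α) (hA : A ⊆ s) (k : ℕ)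
    (hk : A.card ≤ k) :
    ((s.powersetCard k).filter (fun C => A ⊆ C)).card = (s.card - A.card).choose (k - A.card) := by
  rw [← card_sdiff_of_subset hA, ← card_powersetCard]
  apply card_bij' (fun C _ => C \ A) (fun D _ => D ∪ A)
  · intro C hC
    simp only [mem_filter, mem_powersetCard] at hC
    rw [mem_powersetCard]
    exact ⟨sdiff_subset_sdiff hC.1.1 le_rfl, by rw [card_sdiff_of_subset hC.2, hC.1.2]⟩
  · intro D hD
    rw [mem_powersetCard] at hD
    have hDA : Disjoint D A := disjoint_of_subset_left hD.1 (sdiff_disjoint)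
    simp only [mem_filter, mem_powersetCard]
    refine ⟨⟨union_subset (hD.1.trans sdiff_subset) hA, ?_⟩, subset_union_right⟩
    rw [card_union_of_disjoint hDA, hD.2]
    omega
  · intro C hC
    simp only [mem_filter] at hC
    rw [sdiff_union_of_subset hC.2]
  · intro D hD
    rw [mem_powersetCard] at hD
    have hDA : Disjoint D A := disjoint_of_subset_left hD.1 (sdiff_disjoint)
    exact union_sdiff_cancel_right hDA

lemma choose_ratio (m k : ℕ) (hk : k ≤ m) :
    ∀ a, a ≤ k →
    (((m - a).choose (k - a) : ℕ) : ℝ)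
      = (∏ i ∈ Finset.range a, ((k - i : ℕ) : ℝ) / ((m - i : ℕ) : ℝ)) * (m.choose k : ℝ) := by
  intro a
  induction a with
  | zero => simp
  | succ a ih =>
    intro ha
    have ha' : a ≤ k := by omega
    have key : (m - a) * ((m - (a+1)).choose (k - (a+1))) = ((m - a).choose (k - a)) * (k - a) := by
      have := Nat.add_one_mul_choose_eq (m - a - 1) (k - a - 1)
      have h1 : m - a - 1 + 1 = m - a := by omega
      have h2 : k - a - 1 + 1 = k - a := by omega
      simp only [Nat.succ_eq_add_one, h1, h2] at this
      have h3 : m - (a+1) = m - a - 1 := by omega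
      have h4 : k - (a+1) = k - a - 1 := by omega
      rw [h3, h4, this]
    have hma : (0:ℝ) < ((m - a : ℕ) : ℝ) := by
      have : 0 < m - a := by omega
      exact_mod_cast this
    have keyR : (((m - (a+1)).choose (k - (a+1)) : ℕ) : ℝ)
        = (((m - a).choose (k - a) : ℕ) : ℝ) * (((k - a : ℕ) : ℝ) / ((m - a : ℕ) : ℝ)) := by
      field_simp
      have := congrArg (Nat.cast : ℕ → ℝ) key
      push_cast [Nat.cast_sub ha', Nat.cast_sub (show a ≤ m by omega)] at this ⊢
      linarith
    rw [keyR, ih ha', Finset.prod_range_succ]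
    ring

lemma ratio_prod_le (m k a b : ℕ) (hk : k ≤ m) (hab : a + b ≤ k) :
    (∏ i ∈ Finset.range (a + b), ((k - i : ℕ) : ℝ) / ((m - i : ℕ) : ℝ))
      ≤ (∏ i ∈ Finset.range a, ((k - i : ℕ) : ℝ) / ((m - i : ℕ) : ℝ))
        * (∏ i ∈ Finset.range b, ((k - i : ℕ) : ℝ) / ((m - i : ℕ) : ℝ)) := by
  rw [Finset.prod_range_add]
  apply mul_le_mul_of_nonneg_left
  · apply Finset.prod_le_prod
    · intro i _
      positivity
    · intro i hi
      rw [Finset.mem_range] at hi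
      have h1 : a + i < k := by omega
      have hkai : ((k - (a + i) : ℕ) : ℝ) = (k : ℝ) - a - i := by
        push_cast [Nat.cast_sub (by omega : a + i ≤ k)]; ring
      have hmai : ((m - (a + i) : ℕ) : ℝ) = (m : ℝ) - a - i := by
        push_cast [Nat.cast_sub (by omega : a + i ≤ m)]; ring
      have hki : ((k - i : ℕ) : ℝ) = (k : ℝ) - i := by
        push_cast [Nat.cast_sub (by omega : i ≤ k)]; ring
      have hmi : ((m - i : ℕ) : ℝ) = (m : ℝ) - i := by
        push_cast [Nat.cast_sub (by omega : i ≤ m)]; ring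
      rw [hkai, hmai, hki, hmi]
      have hd1 : (0:ℝ) < (m:ℝ) - a - i := by
        have : a + i < m := by omega
        have := (Nat.cast_lt (α := ℝ)).2 this
        push_cast at this ⊢; linarith
      have hd2 : (0:ℝ) < (m:ℝ) - i := by
        have : i < m := by omega
        have := (Nat.cast_lt (α := ℝ)).2 this
        push_cast at this ⊢; linarith
      have hkm : (k:ℝ) ≤ (m:ℝ) := by exact_mod_cast hk
      have hn1 : (0:ℝ) ≤ (k:ℝ) - a - i := by
        have : a + i ≤ k := by omega
        have := (Nat.cast_le (α := ℝ)).2 this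
        push_cast at this ⊢; linarith
      rw [div_le_div_iff₀ hd1 hd2]
      nlinarith [Nat.cast_nonneg (α := ℝ) a]
  · apply Finset.prod_nonneg
    intro i _
    positivity

/-- let `Cl` be a partition of `[n]` into `n_c` clusters, `1 ≤ k ≤ n_c`,
and let `U` be the union of a uniformly random set `C` of `k` clusters of `Cl`. If
`S, S' ⊆ [n]` are such that no cluster intersects both (`Π(S) ∩ Π(S') = ∅`), then
`Cov(1(S ⊆ U), 1(S' ⊆ U)) ≤ 0`. -/
theorem stmt_12 (n n_c k : ℕ) (hk1 : 1 ≤ k) (hkn : k ≤ n_c)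
    (Cl : Finset (Finset (Fin n))) (hClcard : Cl.card = n_c)
    (hdisj : ∀ π ∈ Cl, ∀ π' ∈ Cl, π ≠ π' → Disjoint π π')
    (hcover : ∀ i : Fin n, ∃ π ∈ Cl, i ∈ π)
    (S S' : Finset (Fin n))
    (hsep : Cl.filter (fun π => (S ∩ π).Nonempty) ∩
        Cl.filter (fun π => (S' ∩ π).Nonempty) = ∅) :
    (∑ C ∈ Cl.powersetCard k,
          (if S ⊆ C.sup id then (1 : ℝ) else 0) * (if S' ⊆ C.sup id then (1 : ℝ) else 0)) /
        (n_c.choose k : ℝ) -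
      ((∑ C ∈ Cl.powersetCard k, (if S ⊆ C.sup id then (1 : ℝ) else 0)) /
          (n_c.choose k : ℝ)) *
        ((∑ C ∈ Cl.powersetCard k, (if S' ⊆ C.sup id then (1 : ℝ) else 0)) /
          (n_c.choose k : ℝ)) ≤ 0 := by
  classical
  set A := Cl.filter (fun π => (S ∩ π).Nonempty) with hA
  set B := Cl.filter (fun π => (S' ∩ π).Nonempty) with hB
  have hAsub : A ⊆ Cl := filter_subset _ _
  have hBsub : B ⊆ Cl := filter_subset _ _
  have hABdisj : Disjoint A B := disjoint_iff_inter_eq_empty.2 hsep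
  -- key equivalence
  have key : ∀ (T : Finset (Fin n)) (C : Finset (Finset (Fin n))), C ⊆ Cl →
      (T ⊆ C.sup id ↔ Cl.filter (fun π => (T ∩ π).Nonempty) ⊆ C) := by
    intro T C hC
    constructor
    · intro h π hπ
      rw [mem_filter] at hπ
      obtain ⟨hπCl, x, hx⟩ := hπ
      rw [mem_inter] at hx
      obtain ⟨π', hπ'C, hxπ'⟩ := Finset.mem_sup.1 (h hx.1)
      have : π = π' := by
        by_contra hne
        exact (Finset.disjoint_left.1 (hdisj π hπCl π' (hC hπ'C) hne)) hx.2 hxπ'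
      rwa [this]
    · intro h x hx
      obtain ⟨π, hπ, hxπ⟩ := hcover x
      have hmem : π ∈ Cl.filter (fun π => (T ∩ π).Nonempty) :=
        mem_filter.2 ⟨hπ, ⟨x, mem_inter.2 ⟨hx, hxπ⟩⟩⟩
      exact Finset.mem_sup.2 ⟨π, h hmem, hxπ⟩
  -- rewrite the three sums as cardinalities
  have hsum1 : (∑ C ∈ Cl.powersetCard k, (if S ⊆ C.sup id then (1:ℝ) else 0))
      = (((Cl.powersetCard k).filter (fun C => A ⊆ C)).card : ℝ) := by
    rw [← Finset.sum_boole]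
    apply Finset.sum_congr rfl
    intro C hC
    rw [if_congr (key S C (mem_powersetCard.1 hC).1) rfl rfl]
  have hsum2 : (∑ C ∈ Cl.powersetCard k, (if S' ⊆ C.sup id then (1:ℝ) else 0))
      = (((Cl.powersetCard k).filter (fun C => B ⊆ C)).card : ℝ) := by
    rw [← Finset.sum_boole]
    apply Finset.sum_congr rfl
    intro C hC
    rw [if_congr (key S' C (mem_powersetCard.1 hC).1) rfl rfl]
  have hsum3 : (∑ C ∈ Cl.powersetCard k,
        (if S ⊆ C.sup id then (1:ℝ) else 0) * (if S' ⊆ C.sup id then (1:ℝ) else 0))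
      = (((Cl.powersetCard k).filter (fun C => A ∪ B ⊆ C)).card : ℝ) := by
    rw [← Finset.sum_boole]
    apply Finset.sum_congr rfl
    intro C hC
    have h1 := key S C (mem_powersetCard.1 hC).1
    have h2 := key S' C (mem_powersetCard.1 hC).1
    have hiff : (A ∪ B ⊆ C) ↔ (S ⊆ C.sup id ∧ S' ⊆ C.sup id) := by
      rw [union_subset_iff]
      exact and_congr h1.symm h2.symm
    rw [if_congr hiff rfl rfl]
    by_cases hS : S ⊆ C.sup id <;> by_cases hS' : S' ⊆ C.sup id <;> simp [hS, hS']
  rw [hsum1, hsum2, hsum3]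
  have hc : (0:ℝ) < (n_c.choose k : ℝ) := by
    exact_mod_cast Nat.choose_pos hkn
  by_cases hcase : A.card + B.card ≤ k
  · -- main case
    have hAk : A.card ≤ k := by omega
    have hBk : B.card ≤ k := by omega
    have hUcard : (A ∪ B).card = A.card + B.card := card_union_of_disjoint hABdisj
    have hNA := count_subsets Cl A hAsub k hAk
    have hNB := count_subsets Cl B hBsub k hBk
    have hNAB := count_subsets Cl (A ∪ B) (union_subset hAsub hBsub) k
      (by rw [hUcard]; exact hcase)
    rw [hNA, hNB, hNAB, hUcard, hClcard] at *
    rw [choose_ratio n_c k hkn A.card hAk, choose_ratio n_c k hkn B.card hBk,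
      choose_ratio n_c k hkn (A.card + B.card) hcase]
    rw [mul_div_assoc, div_self (ne_of_gt hc), mul_one, mul_div_assoc, div_self (ne_of_gt hc),
      mul_one, mul_div_assoc, div_self (ne_of_gt hc), mul_one]
    exact sub_nonpos.2 (ratio_prod_le n_c k A.card B.card hkn hcase)
  · -- degenerate case: no k-set contains A ∪ B
    have hempty : ((Cl.powersetCard k).filter (fun C => A ∪ B ⊆ C)) = ∅ := by
      apply filter_eq_empty_iff.2
      intro C hC hsub
      have := card_le_card hsub
      rw [card_union_of_disjoint hABdisj, (mem_powersetCard.1 hC).2] at this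
      omega
    rw [hempty]
    simp only [card_empty, Nat.cast_zero, zero_div, zero_sub, neg_nonpos]
    positivity
end

section
/- Let β = 1. Fix integers n, n_c ≥ 2 with n_c dividing n and reals p ∈ (0,1), q ∈ [p,1] such that pn_c/q and pn are integers and pn > q. Let Π partition [n] into n_c clusters of size n/n_c. Stage 1 selects pn_c/q clusters uniformly at random and lets U be their union; Stage 2, conditional on U, lets z^1 be a uniformly random size-(pn) subset of U and z^0 = ∅. Define L_j = Σ_{i : j ∈ N_i} c_{i,{j}} for j ∈ [n] and L̄_π = (n_c/n) Σ_{j∈π} L_j for π ∈ Π. Then Var( TTE-hat ) = ((1−q)/(pn−q)) · Var̂_{j∈[n]}(L_j) + ((q−p)(pn−1)/(p(n_c−1)(pn−q))) · Var̂_{π∈Π}(L̄_π). -/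
/-!
For `β = 1` the estimator is `(1/(np)) Σ_{j ∈ z¹} L_j`, a sample sum. In a simple random sample
of `m` out of `N` points every point lies in `C(N-1, m-1)` samples and every pair in
`C(N-2, m-2)`, which gives the first two moments of a sample sum. Applying this to `z¹` given
`U` and then to the `pn_c/q` clusters making up `U` yields both moments of the estimator; the
variance formula is then algebra, using `|U| = pn/q`.
-/

open Finset
open scoped BigOperators

theorem div_mul_div_eq_of_le_mul {k s m : ℕ} (hm : m ≤ k * s) (K : ℝ) :
    (m / (k * s) : ℝ) * (k / K) = m / (K * s) := by
  rcases eq_or_ne k 0 with rfl | hk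
  · simp [Nat.le_zero.1 (zero_mul s ▸ hm)]
  rw [div_mul_div_comm, show (k * s * K : ℝ) = K * s * k by ring,
    mul_div_mul_right _ _ (Nat.cast_ne_zero.2 hk)]

namespace Finset

variable {α : Type*} [DecidableEq α]

theorem sum_mem_eq_sum_ite {A S : Finset α} (hAS : A ⊆ S) (f : α → ℝ) :
    ∑ j ∈ A, f j = ∑ j ∈ S, if j ∈ A then f j else 0 := by
  rw [sum_ite_mem, inter_eq_right.2 hAS]

theorem sum_sum_mem_eq_card_mul_sum {𝒜 : Finset (Finset α)} {S : Finset α}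
    (h𝒜 : ∀ A ∈ 𝒜, A ⊆ S) {c : ℕ} (hc : ∀ j ∈ S, #{A ∈ 𝒜 | j ∈ A} = c) (f : α → ℝ) :
    ∑ A ∈ 𝒜, ∑ j ∈ A, f j = c * ∑ j ∈ S, f j := by
  rw [sum_congr rfl fun A hA => sum_mem_eq_sum_ite (h𝒜 A hA) f, sum_comm, mul_sum]
  refine sum_congr rfl fun j hj => ?_
  rw [← sum_filter, sum_const, hc j hj, nsmul_eq_mul]

theorem sum_sq_sum_mem_eq_sum_sum_card_mul {𝒜 : Finset (Finset α)} {S : Finset α}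
    (h𝒜 : ∀ A ∈ 𝒜, A ⊆ S) (f : α → ℝ) :
    ∑ A ∈ 𝒜, (∑ j ∈ A, f j) ^ 2
      = ∑ j ∈ S, ∑ k ∈ S, #{A ∈ 𝒜 | j ∈ A ∧ k ∈ A} * (f j * f k) := by
  have hexpand : ∀ A ∈ 𝒜, (∑ j ∈ A, f j) ^ 2
      = ∑ j ∈ S, ∑ k ∈ S, if j ∈ A ∧ k ∈ A then f j * f k else 0 := fun A hA => by
    simp only [sq, sum_mem_eq_sum_ite (h𝒜 A hA), sum_mul_sum, ite_zero_mul_ite_zero]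
  rw [sum_congr rfl hexpand, sum_comm]
  refine sum_congr rfl fun j _ => ?_
  rw [sum_comm]
  refine sum_congr rfl fun k _ => ?_
  rw [← sum_filter, sum_const, nsmul_eq_mul]

theorem sum_sq_sum_mem_eq_of_card_filter {𝒜 : Finset (Finset α)} {S : Finset α}
    (h𝒜 : ∀ A ∈ 𝒜, A ⊆ S) {c₁ c₂ : ℕ} (hc₁ : ∀ j ∈ S, #{A ∈ 𝒜 | j ∈ A} = c₁)
    (hc₂ : ∀ j ∈ S, ∀ k ∈ S, j ≠ k → #{A ∈ 𝒜 | j ∈ A ∧ k ∈ A} = c₂) (f : α → ℝ) :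
    ∑ A ∈ 𝒜, (∑ j ∈ A, f j) ^ 2
      = c₁ * ∑ j ∈ S, f j ^ 2 + c₂ * ((∑ j ∈ S, f j) ^ 2 - ∑ j ∈ S, f j ^ 2) := by
  have hrow : ∀ j ∈ S, ∑ k ∈ S, #{A ∈ 𝒜 | j ∈ A ∧ k ∈ A} * (f j * f k)
      = c₁ * f j ^ 2 + c₂ * (f j * ∑ k ∈ S, f k - f j ^ 2) := fun j hj => by
    have hoff : ∀ k ∈ S.erase j, (#{A ∈ 𝒜 | j ∈ A ∧ k ∈ A} : ℝ) * (f j * f k)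
        = c₂ * (f j * f k) := fun k hk => by
      rw [hc₂ j hj k (mem_of_mem_erase hk) (ne_of_mem_erase hk).symm]
    rw [← add_sum_erase _ _ hj, sum_congr rfl hoff, ← add_sum_erase _ _ hj, ← mul_sum,
      ← mul_sum]
    simp only [and_self, hc₁ j hj]
    ring
  rw [sum_sq_sum_mem_eq_sum_sum_card_mul h𝒜, sum_congr rfl hrow, sum_add_distrib, ← mul_sum,
    ← mul_sum, sum_sub_distrib, ← sum_mul, sq (∑ j ∈ S, f j)]

theorem card_filter_powersetCard_succ_mem {S : Finset α} {j : α} (hj : j ∈ S) (m : ℕ) :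
    #{A ∈ S.powersetCard (m + 1) | j ∈ A} = (#S - 1).choose m := by
  simpa using card_filter_powersetCard_subset {j} S (m + 1) (by simpa) (by simp)

theorem card_filter_powersetCard_add_two_mem_and_mem {S : Finset α} {j k : α} (hj : j ∈ S)
    (hk : k ∈ S) (hjk : j ≠ k) (m : ℕ) :
    #{A ∈ S.powersetCard (m + 2) | j ∈ A ∧ k ∈ A} = (#S - 2).choose m := by
  simpa [card_pair hjk, insert_subset_iff] using
    card_filter_powersetCard_subset {j, k} S (m + 2) (by simp [insert_subset_iff, hj, hk])
      (by simp [card_pair hjk])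

theorem card_filter_powersetCard_one_mem_and_mem (S : Finset α) {j k : α} (hjk : j ≠ k) :
    #{A ∈ S.powersetCard 1 | j ∈ A ∧ k ∈ A} = 0 := by
  simp only [card_eq_zero, filter_eq_empty_iff, mem_powersetCard, card_eq_one]
  rintro A ⟨-, a, rfl⟩ ⟨hja, hka⟩
  exact hjk ((mem_singleton.1 hja).trans (mem_singleton.1 hka).symm)

theorem expect_powersetCard_sum {S : Finset α} {m : ℕ} (hm : m ≤ #S) (f : α → ℝ) :
    𝔼 A ∈ S.powersetCard m, ∑ j ∈ A, f j = m / #S * ∑ j ∈ S, f j := by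
  rcases m with _ | m
  · simp
  obtain ⟨N, hN⟩ : ∃ N, #S = N + 1 := ⟨#S - 1, by omega⟩
  have hc : ∀ j ∈ S, #{A ∈ S.powersetCard (m + 1) | j ∈ A} = N.choose m := fun j hj => by
    rw [card_filter_powersetCard_succ_mem hj, hN, Nat.add_sub_cancel]
  have hrel : ((N + 1 : ℕ) : ℝ) * N.choose m = (N + 1).choose (m + 1) * (m + 1 : ℕ) := by
    exact_mod_cast Nat.add_one_mul_choose_eq N m
  have hpos : 0 < (N + 1).choose (m + 1) := Nat.choose_pos (by omega)
  rw [expect_eq_sum_div_card, card_powersetCard,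
    sum_sum_mem_eq_card_mul_sum (fun A hA => (mem_powersetCard.1 hA).1) hc, hN]
  field_simp
  linear_combination (∑ j ∈ S, f j) * hrel

theorem card_sub_one_mul_expect_powersetCard_sq_sum {S : Finset α} {m : ℕ} (hm : m ≤ #S)
    (f : α → ℝ) :
    (#S - 1 : ℝ) * 𝔼 A ∈ S.powersetCard m, (∑ j ∈ A, f j) ^ 2
      = m / #S * ((#S - m) * ∑ j ∈ S, f j ^ 2 + (m - 1) * (∑ j ∈ S, f j) ^ 2) := by
  have hsub : ∀ A ∈ S.powersetCard m, A ⊆ S := fun A hA => (mem_powersetCard.1 hA).1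
  rcases m with _ | _ | m
  · simp
  · have h := sum_sq_sum_mem_eq_of_card_filter hsub (c₁ := 1) (c₂ := 0)
      (fun j hj => by rw [card_filter_powersetCard_succ_mem hj, Nat.choose_zero_right])
      (fun j _ k _ hjk => card_filter_powersetCard_one_mem_and_mem S hjk) f
    rw [expect_eq_sum_div_card, card_powersetCard, Nat.choose_one_right, h]
    field_simp
    ring
  obtain ⟨N, hN⟩ : ∃ N, #S = N + 2 := ⟨#S - 2, by omega⟩
  have h := sum_sq_sum_mem_eq_of_card_filter hsub (c₁ := (N + 1).choose (m + 1)) (c₂ := N.choose m)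
    (fun j hj => by rw [card_filter_powersetCard_succ_mem hj, hN]; rfl)
    (fun j hj k hk hjk => by
      rw [card_filter_powersetCard_add_two_mem_and_mem hj hk hjk, hN]; rfl) f
  have hrel₁ : ((N + 1 : ℕ) : ℝ) * N.choose m = (N + 1).choose (m + 1) * (m + 1 : ℕ) := by
    exact_mod_cast Nat.add_one_mul_choose_eq N m
  have hrel₂ :
      ((N + 2 : ℕ) : ℝ) * (N + 1).choose (m + 1) = (N + 2).choose (m + 2) * (m + 2 : ℕ) := by
    exact_mod_cast Nat.add_one_mul_choose_eq (N + 1) (m + 1)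
  have hpos : 0 < (N + 2).choose (m + 2) := Nat.choose_pos (by omega)
  rw [expect_eq_sum_div_card, card_powersetCard, h, hN]
  push_cast at hrel₁ hrel₂ ⊢
  field_simp
  linear_combination (N + 2 : ℝ) * ((∑ j ∈ S, f j) ^ 2 - ∑ j ∈ S, f j ^ 2) * hrel₁
    + ((N - m : ℝ) * ∑ j ∈ S, f j ^ 2 + (m + 1) * (∑ j ∈ S, f j) ^ 2) * hrel₂

section ClusterSampling

variable {𝒞 : Finset (Finset α)} {s : ℕ}

theorem card_sup_of_subset (h𝒞 : (𝒞 : Set (Finset α)).PairwiseDisjoint id)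
    (hs : ∀ π ∈ 𝒞, #π = s) {C : Finset (Finset α)} (hC : C ⊆ 𝒞) : #(C.sup id) = #C * s := by
  rw [sup_eq_biUnion, card_biUnion (h𝒞.subset hC)]
  exact sum_const_nat fun π hπ => hs π (hC hπ)

theorem sum_sup_of_subset (h𝒞 : (𝒞 : Set (Finset α)).PairwiseDisjoint id)
    {C : Finset (Finset α)} (hC : C ⊆ 𝒞) (f : α → ℝ) :
    ∑ j ∈ C.sup id, f j = ∑ π ∈ C, ∑ j ∈ π, f j := by
  rw [sup_eq_biUnion, sum_biUnion (h𝒞.subset hC)]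
  rfl

theorem sum_sum_powersetCard_sup_div_eq_expect (h𝒞 : (𝒞 : Set (Finset α)).PairwiseDisjoint id)
    (hs : ∀ π ∈ 𝒞, #π = s) {k m : ℕ} (g : Finset (Finset α) → Finset α → ℝ) :
    (∑ C ∈ 𝒞.powersetCard k, ∑ A ∈ (C.sup id).powersetCard m, g C A)
        / ((#𝒞).choose k * (k * s).choose m)
      = 𝔼 C ∈ 𝒞.powersetCard k, 𝔼 A ∈ (C.sup id).powersetCard m, g C A := by
  rw [expect_eq_sum_div_card, card_powersetCard, mul_comm, ← div_div, sum_div]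
  congr 1
  refine sum_congr rfl fun C hC => ?_
  obtain ⟨hC𝒞, hCk⟩ := mem_powersetCard.1 hC
  rw [expect_eq_sum_div_card, card_powersetCard, card_sup_of_subset h𝒞 hs hC𝒞, hCk]

theorem expect_powersetCard_sup_sum (h𝒞 : (𝒞 : Set (Finset α)).PairwiseDisjoint id)
    (hs : ∀ π ∈ 𝒞, #π = s) {k m : ℕ} (hk : k ≤ #𝒞) (hm : m ≤ k * s) (f : α → ℝ) :
    𝔼 C ∈ 𝒞.powersetCard k, 𝔼 A ∈ (C.sup id).powersetCard m, ∑ j ∈ A, f j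
      = m / (#𝒞 * s) * ∑ π ∈ 𝒞, ∑ j ∈ π, f j := by
  have hinner : ∀ C ∈ 𝒞.powersetCard k, 𝔼 A ∈ (C.sup id).powersetCard m, ∑ j ∈ A, f j
      = m / (k * s) * ∑ π ∈ C, ∑ j ∈ π, f j := fun C hC => by
    obtain ⟨hC𝒞, hCk⟩ := mem_powersetCard.1 hC
    have hU : #(C.sup id) = k * s := by rw [card_sup_of_subset h𝒞 hs hC𝒞, hCk]
    rw [expect_powersetCard_sum (hU ▸ hm), hU, sum_sup_of_subset h𝒞 hC𝒞, Nat.cast_mul]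
  rw [expect_congr rfl hinner, ← mul_expect, expect_powersetCard_sum hk, ← mul_assoc,
    div_mul_div_eq_of_le_mul hm]

theorem mul_expect_powersetCard_sup_sq_sum (h𝒞 : (𝒞 : Set (Finset α)).PairwiseDisjoint id)
    (hs : ∀ π ∈ 𝒞, #π = s) {k m : ℕ} (hk : k ≤ #𝒞) (hm : m ≤ k * s) (f : α → ℝ) :
    (k * s - 1 : ℝ) * (#𝒞 - 1) *
        𝔼 C ∈ 𝒞.powersetCard k, 𝔼 A ∈ (C.sup id).powersetCard m, (∑ j ∈ A, f j) ^ 2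
      = m / (#𝒞 * s) * ((k * s - m) * (#𝒞 - 1) * ∑ π ∈ 𝒞, ∑ j ∈ π, f j ^ 2
          + (m - 1) * (#𝒞 - k) * ∑ π ∈ 𝒞, (∑ j ∈ π, f j) ^ 2
          + (m - 1) * (k - 1) * (∑ π ∈ 𝒞, ∑ j ∈ π, f j) ^ 2) := by
  have hinner : ∀ C ∈ 𝒞.powersetCard k,
      (k * s - 1 : ℝ) * 𝔼 A ∈ (C.sup id).powersetCard m, (∑ j ∈ A, f j) ^ 2
        = m / (k * s) * ((k * s - m) * ∑ π ∈ C, ∑ j ∈ π, f j ^ 2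
            + (m - 1) * (∑ π ∈ C, ∑ j ∈ π, f j) ^ 2) := fun C hC => by
    obtain ⟨hC𝒞, hCk⟩ := mem_powersetCard.1 hC
    have hU : #(C.sup id) = k * s := by rw [card_sup_of_subset h𝒞 hs hC𝒞, hCk]
    have h := card_sub_one_mul_expect_powersetCard_sq_sum (hU ▸ hm) f
    rw [hU, sum_sup_of_subset h𝒞 hC𝒞, sum_sup_of_subset h𝒞 hC𝒞, Nat.cast_mul] at h
    exact h
  have hW := expect_powersetCard_sum hk (fun π => ∑ j ∈ π, f j ^ 2)
  have hV := card_sub_one_mul_expect_powersetCard_sq_sum hk (fun π => ∑ j ∈ π, f j)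
  calc (k * s - 1 : ℝ) * (#𝒞 - 1) *
        𝔼 C ∈ 𝒞.powersetCard k, 𝔼 A ∈ (C.sup id).powersetCard m, (∑ j ∈ A, f j) ^ 2
      = (#𝒞 - 1) * 𝔼 C ∈ 𝒞.powersetCard k,
          m / (k * s) * ((k * s - m) * ∑ π ∈ C, ∑ j ∈ π, f j ^ 2
            + (m - 1) * (∑ π ∈ C, ∑ j ∈ π, f j) ^ 2) := by
        rw [mul_comm _ (#𝒞 - 1 : ℝ), mul_assoc, mul_expect, expect_congr rfl hinner]
    _ = m / (k * s) * ((k * s - m) * (#𝒞 - 1) *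
            𝔼 C ∈ 𝒞.powersetCard k, ∑ π ∈ C, ∑ j ∈ π, f j ^ 2
          + (m - 1) * ((#𝒞 - 1) * 𝔼 C ∈ 𝒞.powersetCard k, (∑ π ∈ C, ∑ j ∈ π, f j) ^ 2)) := by
        rw [← mul_expect, expect_add_distrib, ← mul_expect, ← mul_expect]
        ring
    _ = _ := by
        rw [hW, hV]
        linear_combination ((k * s - m) * (#𝒞 - 1) * ∑ π ∈ 𝒞, ∑ j ∈ π, f j ^ 2
          + (m - 1) * ((#𝒞 - k) * ∑ π ∈ 𝒞, (∑ j ∈ π, f j) ^ 2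
            + (k - 1) * (∑ π ∈ 𝒞, ∑ j ∈ π, f j) ^ 2))
          * div_mul_div_eq_of_le_mul hm (#𝒞 : ℝ)

theorem sum_univ_eq_sum_sum_of_cover [Fintype α]
    (h𝒞 : (𝒞 : Set (Finset α)).PairwiseDisjoint id) (hcover : ∀ i, ∃ π ∈ 𝒞, i ∈ π)
    (f : α → ℝ) : ∑ j, f j = ∑ π ∈ 𝒞, ∑ j ∈ π, f j := by
  rw [← sum_sup_of_subset h𝒞 subset_rfl]
  congr 1
  ext i
  simpa using hcover i

end ClusterSampling

end Finset

theorem sum_sub_empty_eq_sum_sum_filter_of_linear {ι : Type*} [Fintype ι] [DecidableEq ι]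
    (N : ι → Finset ι) (c0 : ι → ℝ) (c1 : ι → ι → ℝ) (Y : ι → Finset ι → ℝ)
    (hY : ∀ i T, Y i T = c0 i + ∑ j ∈ N i, c1 i j * if j ∈ T then 1 else 0) (A : Finset ι) :
    ∑ i, (Y i A - Y i ∅) = ∑ j ∈ A, ∑ i with j ∈ N i, c1 i j := by
  simp only [hY, Finset.notMem_empty, if_false, mul_zero, Finset.sum_const_zero, add_zero,
    add_sub_cancel_left, mul_ite, mul_one, ← Finset.sum_filter]
  exact Finset.sum_comm' fun i j => by simp [and_comm]

theorem le_and_le_mul_and_one_lt_mul_of_design {n_c s kc m : ℕ} {p q : ℝ} (hp0 : 0 < p)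
    (hpq : p ≤ q) (hq1 : q ≤ 1) (hpnq : q < p * (n_c * s)) (hkc : (kc : ℝ) = p * n_c / q)
    (hm : (m : ℝ) = p * (n_c * s)) : kc ≤ n_c ∧ m ≤ kc * s ∧ (1 : ℝ) < kc * s := by
  have hq : 0 < q := hp0.trans_le hpq
  have hkcq : (kc : ℝ) * q = p * n_c := by rw [hkc]; field_simp
  have hU : (kc * s : ℝ) * q = m := by rw [hm]; linear_combination (s : ℝ) * hkcq
  refine ⟨?_, ?_, by nlinarith⟩
  · have : (kc : ℝ) ≤ n_c := by nlinarith
    exact_mod_cast this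
  · have : (m : ℝ) ≤ kc * s := by nlinarith
    exact_mod_cast this

theorem stmt_13_general (n n_c s : ℕ) (hnc : 2 ≤ n_c) (hns : n = n_c * s)
    (p q : ℝ) (hp0 : 0 < p) (hpq : p ≤ q) (hq1 : q ≤ 1)
    (hpnq : q < p * (n : ℝ))
    (Cl : Finset (Finset (Fin n))) (hClcard : Cl.card = n_c)
    (hdisj : ∀ π ∈ Cl, ∀ π' ∈ Cl, π ≠ π' → Disjoint π π')
    (hcover : ∀ i : Fin n, ∃ π ∈ Cl, i ∈ π)
    (hsize : ∀ π ∈ Cl, π.card = s)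
    (kc : ℕ) (hkc : (kc : ℝ) = p * (n_c : ℝ) / q)
    (m : ℕ) (hm : (m : ℝ) = p * (n : ℝ))
    (Nbhd : Fin n → Finset (Fin n)) (c0 : Fin n → ℝ) (c1 : Fin n → Fin n → ℝ)
    (Y : Fin n → Finset (Fin n) → ℝ)
    (hY : ∀ i T, Y i T = c0 i + ∑ j ∈ Nbhd i, c1 i j * (if j ∈ T then (1 : ℝ) else 0))
    (L : Fin n → ℝ)
    (hL : ∀ j, L j = ∑ i ∈ Finset.univ.filter (fun i => j ∈ Nbhd i), c1 i j)
    (Lbar : Finset (Fin n) → ℝ)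
    (hLbar : ∀ π, Lbar π = ((n_c : ℝ) / (n : ℝ)) * ∑ j ∈ π, L j)
    (TTEhat : Finset (Finset (Fin n)) → Finset (Fin n) → ℝ)
    (hT : ∀ C A, TTEhat C A = (1 / ((n : ℝ) * p)) * ∑ i, (Y i A - Y i ∅))
    (E : (Finset (Finset (Fin n)) → Finset (Fin n) → ℝ) → ℝ)
    (hE : ∀ g, E g =
      (∑ C ∈ Cl.powersetCard kc, ∑ A ∈ (C.sup id).powersetCard m, g C A) /
        ((n_c.choose kc : ℝ) * ((kc * s).choose m : ℝ))) :
    E (fun C A => (TTEhat C A) ^ 2) - (E TTEhat) ^ 2 =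
      ((1 - q) / (p * (n : ℝ) - q)) *
          ((1 / (n : ℝ)) * ∑ j, (L j) ^ 2 - ((1 / (n : ℝ)) * ∑ j, L j) ^ 2) +
        ((q - p) * (p * (n : ℝ) - 1) / (p * ((n_c : ℝ) - 1) * (p * (n : ℝ) - q))) *
          ((1 / (n_c : ℝ)) * ∑ π ∈ Cl, (Lbar π) ^ 2 -
            ((1 / (n_c : ℝ)) * ∑ π ∈ Cl, Lbar π) ^ 2) := by
  have hn : (n : ℝ) = n_c * s := by exact_mod_cast hns
  obtain ⟨hkc_le, hm_le, hU1⟩ :=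
    le_and_le_mul_and_one_lt_mul_of_design hp0 hpq hq1 (hn ▸ hpnq) hkc (hn ▸ hm)
  have hT_sum : ∀ C A, TTEhat C A = 1 / (n * p) * ∑ j ∈ A, L j := fun C A => by
    rw [hT, sum_sub_empty_eq_sum_sum_filter_of_linear Nbhd c0 c1 Y hY,
      sum_congr rfl fun j _ => (hL j).symm]
  have hE_expect : ∀ g, E g = 𝔼 C ∈ Cl.powersetCard kc, 𝔼 A ∈ (C.sup id).powersetCard m, g C A :=
    fun g => by rw [hE, ← hClcard, sum_sum_powersetCard_sup_div_eq_expect hdisj hsize]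
  have hsum_clusters := sum_univ_eq_sum_sum_of_cover hdisj hcover
  have hmean := expect_powersetCard_sup_sum hdisj hsize (hClcard ▸ hkc_le) hm_le L
  have hsecond := mul_expect_powersetCard_sup_sq_sum hdisj hsize (hClcard ▸ hkc_le) hm_le L
  rw [hClcard] at hmean hsecond
  have hncR : (2 : ℝ) ≤ n_c := by exact_mod_cast hnc
  have hnc1 : (n_c : ℝ) - 1 ≠ 0 := by linarith
  have hden : ((kc * s : ℝ) - 1) * (n_c - 1) ≠ 0 := mul_ne_zero (by linarith) hnc1
  simp only [hE_expect, hT_sum, mul_pow, ← mul_expect, hmean]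
  rw [eq_div_of_mul_eq hden ((mul_comm _ _).trans hsecond), hsum_clusters L,
    hsum_clusters fun j => L j ^ 2]
  simp only [hLbar, mul_pow, ← mul_sum]
  have hq0 : q ≠ 0 := (hp0.trans_le hpq).ne'
  have hpnq' : (n_c * s : ℝ) * p - q ≠ 0 := by rw [← hn]; linarith
  rw [hm, hkc, hn]
  field_simp
  ring

/-- exact variance of the two-stage estimator for `β = 1` under the
clustered CRD rollout. Stage 1 chooses `pn_c/q` clusters uniformly at random from an
equal-size partition `Cl` of `[n]` into `n_c` clusters (so `U`, the union, has size
`pn/q`), and Stage 2 chooses `z^1` as a uniformly random size-`pn` subset of `U`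
(`z^0 = ∅`). With `L_j = Σ_{i : j ∈ N_i} c_{i,{j}}`, `L̄_π = (n_c/n) Σ_{j∈π} L_j`,
`Y_i(T) = c_{i,∅} + Σ_{j∈N_i} c_{i,{j}} 1(j ∈ T)` and
`TTE-hat(C,A) = (1/(np)) Σ_i (Y_i(A) − Y_i(∅))`, it holds that
`Var(TTE-hat) = ((1−q)/(pn−q))·Var̂_{j∈[n]}(L_j)
 + ((q−p)(pn−1)/(p(n_c−1)(pn−q)))·Var̂_{π∈Π}(L̄_π)`. -/
theorem stmt_13 (n n_c s : ℕ) (hnc : 2 ≤ n_c) (hns : n = n_c * s)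
    (p q : ℝ) (hp0 : 0 < p) (hp1 : p < 1) (hpq : p ≤ q) (hq1 : q ≤ 1)
    (hpnq : q < p * (n : ℝ))
    (Cl : Finset (Finset (Fin n))) (hClcard : Cl.card = n_c)
    (hdisj : ∀ π ∈ Cl, ∀ π' ∈ Cl, π ≠ π' → Disjoint π π')
    (hcover : ∀ i : Fin n, ∃ π ∈ Cl, i ∈ π)
    (hsize : ∀ π ∈ Cl, π.card = s)
    (kc : ℕ) (hkc : (kc : ℝ) = p * (n_c : ℝ) / q)
    (m : ℕ) (hm : (m : ℝ) = p * (n : ℝ))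
    (Nbhd : Fin n → Finset (Fin n)) (c0 : Fin n → ℝ) (c1 : Fin n → Fin n → ℝ)
    (Y : Fin n → Finset (Fin n) → ℝ)
    (hY : ∀ i T, Y i T = c0 i + ∑ j ∈ Nbhd i, c1 i j * (if j ∈ T then (1 : ℝ) else 0))
    (L : Fin n → ℝ)
    (hL : ∀ j, L j = ∑ i ∈ Finset.univ.filter (fun i => j ∈ Nbhd i), c1 i j)
    (Lbar : Finset (Fin n) → ℝ)
    (hLbar : ∀ π, Lbar π = ((n_c : ℝ) / (n : ℝ)) * ∑ j ∈ π, L j)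
    (TTEhat : Finset (Finset (Fin n)) → Finset (Fin n) → ℝ)
    (hT : ∀ C A, TTEhat C A = (1 / ((n : ℝ) * p)) * ∑ i, (Y i A - Y i ∅))
    (E : (Finset (Finset (Fin n)) → Finset (Fin n) → ℝ) → ℝ)
    (hE : ∀ g, E g =
      (∑ C ∈ Cl.powersetCard kc, ∑ A ∈ (C.sup id).powersetCard m, g C A) /
        ((n_c.choose kc : ℝ) * ((kc * s).choose m : ℝ))) :
    E (fun C A => (TTEhat C A) ^ 2) - (E TTEhat) ^ 2 =
      ((1 - q) / (p * (n : ℝ) - q)) *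
          ((1 / (n : ℝ)) * ∑ j, (L j) ^ 2 - ((1 / (n : ℝ)) * ∑ j, L j) ^ 2) +
        ((q - p) * (p * (n : ℝ) - 1) / (p * ((n_c : ℝ) - 1) * (p * (n : ℝ) - q))) *
          ((1 / (n_c : ℝ)) * ∑ π ∈ Cl, (Lbar π) ^ 2 -
            ((1 / (n_c : ℝ)) * ∑ π ∈ Cl, Lbar π) ^ 2) :=
  stmt_13_general n n_c s hnc hns p q hp0 hpq hq1 hpnq Cl hClcard hdisj hcover hsize kc hkc m hm
    Nbhd c0 c1 Y hY L hL Lbar hLbar TTEhat hT E hE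
end

section
/- In the β = 1 clustered two-stage design (Stage 1: union U of pn_c/q uniformly random clusters from an equal-size partition Π of [n] into n_c clusters; Stage 2 conditional on U: z^1 a uniformly random size-(pn) subset of U), with pn > q, n_c ≥ 2, the expectation over U of the conditional variance of TTE-hat = (1/(np)) Σ_j L_j z^1_j given U equals ((1−q)/(np−q)) · [ Var̂_{j∈[n]}(L_j) + ((p−q)/(p(n_c−1))) · Var̂_{π∈Π}(L̄_π) ]. -/
open Finset

variable {α : Type*} [DecidableEq α]

lemma count_one (U : Finset α) (m : ℕ) (hm : 1 ≤ m) (j : α) (hj : j ∈ U) :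
    ((U.powersetCard m).filter (fun A => j ∈ A)).card = (U.card - 1).choose (m - 1) := by
  rw [← card_erase_of_mem hj, ← Finset.card_powersetCard (m - 1) (U.erase j)]
  refine Finset.card_bij' (fun A _ => A.erase j) (fun B _ => insert j B) ?_ ?_ ?_ ?_
  · intro A hA
    obtain ⟨hA, hjA⟩ := mem_filter.mp hA
    obtain ⟨hAU, hAc⟩ := mem_powersetCard.mp hA
    exact mem_powersetCard.mpr ⟨erase_subset_erase j hAU, by rw [card_erase_of_mem hjA, hAc]⟩
  · intro B hB
    obtain ⟨hBU, hBc⟩ := mem_powersetCard.mp hB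
    have hjB : j ∉ B := fun h => (mem_erase.mp (hBU h)).1 rfl
    refine mem_filter.mpr ⟨mem_powersetCard.mpr ⟨insert_subset hj (hBU.trans (erase_subset j U)), ?_⟩, mem_insert_self _ _⟩
    rw [card_insert_of_notMem hjB, hBc]
    omega
  · intro A hA
    exact insert_erase (mem_filter.mp hA).2
  · intro B hB
    obtain ⟨hBU, _⟩ := mem_powersetCard.mp hB
    exact erase_insert (fun h => (mem_erase.mp (hBU h)).1 rfl)

lemma count_two (U : Finset α) (m : ℕ) (j j' : α) (hj : j ∈ U) (hj' : j' ∈ U)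
    (hne : j ≠ j') :
    ((U.powersetCard m).filter (fun A => j ∈ A ∧ j' ∈ A)).card
      = if 2 ≤ m then (U.card - 2).choose (m - 2) else 0 := by
  by_cases hm : 2 ≤ m
  · rw [if_pos hm]
    have hj'e : j' ∈ U.erase j := mem_erase.mpr ⟨fun h => hne h.symm, hj'⟩
    have hcard2 : ((U.erase j).erase j').card = U.card - 2 := by
      rw [card_erase_of_mem hj'e, card_erase_of_mem hj]
      omega
    rw [← hcard2, ← Finset.card_powersetCard (m - 2) ((U.erase j).erase j')]
    refine Finset.card_bij' (fun A _ => (A.erase j).erase j')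
      (fun B _ => insert j (insert j' B)) ?_ ?_ ?_ ?_
    · intro A hA
      obtain ⟨hA, hjA, hj'A⟩ := mem_filter.mp hA
      obtain ⟨hAU, hAc⟩ := mem_powersetCard.mp hA
      have hj'Ae : j' ∈ A.erase j := mem_erase.mpr ⟨fun h => hne h.symm, hj'A⟩
      refine mem_powersetCard.mpr ⟨erase_subset_erase j' (erase_subset_erase j hAU), ?_⟩
      rw [card_erase_of_mem hj'Ae, card_erase_of_mem hjA, hAc]
      omega
    · intro B hB
      obtain ⟨hBU, hBc⟩ := mem_powersetCard.mp hB
      have hjB : j ∉ B := fun h => (mem_erase.mp (mem_erase.mp (hBU h)).2).1 rfl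
      have hj'B : j' ∉ B := fun h => (mem_erase.mp (hBU h)).1 rfl
      refine mem_filter.mpr ⟨mem_powersetCard.mpr ⟨?_, ?_⟩,
        mem_insert_self _ _, mem_insert_of_mem (mem_insert_self _ _)⟩
      · exact insert_subset hj (insert_subset hj'
          (hBU.trans ((erase_subset _ _).trans (erase_subset _ _))))
      · have hjB' : j ∉ insert j' B := by simp [hjB, hne]
        rw [card_insert_of_notMem hjB', card_insert_of_notMem hj'B, hBc]
        omega
    · intro A hA
      obtain ⟨hA, hjA, hj'A⟩ := mem_filter.mp hA
      have hj'Ae : j' ∈ A.erase j := mem_erase.mpr ⟨fun h => hne h.symm, hj'A⟩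
      rw [insert_erase hj'Ae, insert_erase hjA]
    · intro B hB
      obtain ⟨hBU, _⟩ := mem_powersetCard.mp hB
      have hjB : j ∉ B := fun h => (mem_erase.mp (mem_erase.mp (hBU h)).2).1 rfl
      have hj'B : j' ∉ B := fun h => (mem_erase.mp (hBU h)).1 rfl
      have : j ∉ insert j' B := by simp [hjB, hne]
      rw [erase_insert this, erase_insert hj'B]
  · rw [if_neg hm]
    rw [Finset.card_eq_zero, Finset.filter_eq_empty_iff]
    intro A hA
    obtain ⟨hAU, hAc⟩ := mem_powersetCard.mp hA
    intro ⟨h1, h2⟩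
    have hsub : ({j, j'} : Finset α) ⊆ A := insert_subset h1 (singleton_subset_iff.mpr h2)
    have hc := Finset.card_le_card hsub
    rw [card_insert_of_notMem (by simp [hne]), card_singleton, hAc] at hc
    omega

lemma sum_pow_linear (U : Finset α) (m : ℕ) (hm : 1 ≤ m) (f : α → ℝ) :
    ∑ A ∈ U.powersetCard m, ∑ j ∈ A, f j
      = ((U.card - 1).choose (m - 1) : ℝ) * ∑ j ∈ U, f j := by
  calc ∑ A ∈ U.powersetCard m, ∑ j ∈ A, f j
      = ∑ A ∈ U.powersetCard m, ∑ j ∈ U, if j ∈ A then f j else 0 := by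
        refine sum_congr rfl fun A hA => ?_
        rw [sum_ite_mem, inter_eq_right.mpr (mem_powersetCard.mp hA).1]
    _ = ∑ j ∈ U, ∑ A ∈ U.powersetCard m, if j ∈ A then f j else 0 := sum_comm
    _ = ∑ j ∈ U, ((U.card - 1).choose (m - 1) : ℝ) * f j := by
        refine sum_congr rfl fun j hj => ?_
        rw [sum_ite, sum_const, sum_const_zero, add_zero, count_one U m hm j hj,
          nsmul_eq_mul]
    _ = _ := by rw [← mul_sum]

lemma sum_pow_sq (U : Finset α) (m : ℕ) (hm : 1 ≤ m) (f : α → ℝ) :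
    ∑ A ∈ U.powersetCard m, (∑ j ∈ A, f j) ^ 2
      = ((U.card - 1).choose (m - 1) : ℝ) * ∑ j ∈ U, f j ^ 2
        + (if 2 ≤ m then ((U.card - 2).choose (m - 2) : ℝ) else 0)
          * ((∑ j ∈ U, f j) ^ 2 - ∑ j ∈ U, f j ^ 2) := by
  have expand : ∀ A ∈ U.powersetCard m, (∑ j ∈ A, f j) ^ 2
      = ∑ j ∈ A, f j ^ 2 + ∑ j ∈ A, ∑ j' ∈ A.erase j, f j * f j' := by
    intro A _
    rw [sq, sum_mul_sum]
    rw [← sum_add_distrib]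
    refine sum_congr rfl fun j hj => ?_
    rw [← Finset.add_sum_erase _ _ hj, sq]
  rw [sum_congr rfl expand, sum_add_distrib, sum_pow_linear U m hm]
  congr 1
  -- cross term
  have swap : ∀ A ∈ U.powersetCard m,
      ∑ j ∈ A, ∑ j' ∈ A.erase j, f j * f j'
      = ∑ j ∈ U, ∑ j' ∈ U.erase j, if j ∈ A ∧ j' ∈ A then f j * f j' else 0 := by
    intro A hA
    have hAU := (mem_powersetCard.mp hA).1
    have step1 : ∀ j : α, (∑ j' ∈ U.erase j, if j ∈ A ∧ j' ∈ A then f j * f j' else 0)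
        = if j ∈ A then ∑ j' ∈ A.erase j, f j * f j' else 0 := by
      intro j
      by_cases hjA : j ∈ A
      · rw [if_pos hjA]
        calc (∑ j' ∈ U.erase j, if j ∈ A ∧ j' ∈ A then f j * f j' else 0)
            = ∑ j' ∈ U.erase j, if j' ∈ A then f j * f j' else 0 := by
              refine sum_congr rfl fun j' _ => ?_
              rw [ite_and, if_pos hjA]
          _ = ∑ j' ∈ (U.erase j) ∩ A, f j * f j' := sum_ite_mem _ _ _
          _ = ∑ j' ∈ A.erase j, f j * f j' := by
              rw [erase_inter, inter_eq_right.mpr hAU]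
      · rw [if_neg hjA]
        refine sum_eq_zero fun j' _ => ?_
        rw [ite_and, if_neg hjA]
    rw [sum_congr rfl (fun j _ => step1 j), sum_ite, sum_const_zero, add_zero,
      filter_mem_eq_inter, inter_eq_right.mpr hAU]
  rw [sum_congr rfl swap, sum_comm]
  have inner : ∀ j ∈ U, ∑ A ∈ U.powersetCard m, ∑ j' ∈ U.erase j,
      (if j ∈ A ∧ j' ∈ A then f j * f j' else 0)
      = (if 2 ≤ m then ((U.card - 2).choose (m - 2) : ℝ) else 0)
        * ∑ j' ∈ U.erase j, f j * f j' := by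
    intro j hj
    rw [sum_comm, mul_sum]
    refine sum_congr rfl fun j' hj' => ?_
    obtain ⟨hne', hj'U⟩ := mem_erase.mp hj'
    rw [sum_ite, sum_const, sum_const_zero, add_zero, nsmul_eq_mul,
      count_two U m j j' hj hj'U (Ne.symm hne')]
    split_ifs <;> push_cast <;> ring
  rw [sum_congr rfl inner, ← mul_sum]
  congr 1
  have : ∀ j ∈ U, ∑ j' ∈ U.erase j, f j * f j' = f j * (∑ j' ∈ U, f j') - f j ^ 2 := by
    intro j hj
    rw [← mul_sum, sum_erase_eq_sub hj]
    ring
  rw [sum_congr rfl this, sum_sub_distrib, ← sum_mul]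
  ring

lemma choose_ratio_one (N m : ℕ) (hm : 1 ≤ m) (hmN : m ≤ N) :
    ((N - 1).choose (m - 1) : ℝ) = (N.choose m : ℝ) * m / N := by
  have key : N * (N - 1).choose (m - 1) = N.choose m * m := by
    obtain ⟨N', rfl⟩ : ∃ N', N = N' + 1 := ⟨N - 1, by omega⟩
    obtain ⟨m', rfl⟩ : ∃ m', m = m' + 1 := ⟨m - 1, by omega⟩
    simpa using Nat.add_one_mul_choose_eq N' m'
  have hN0 : (N : ℝ) ≠ 0 := by
    have : 1 ≤ N := le_trans hm hmN
    positivity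
  rw [Nat.mul_comm] at key
  field_simp
  exact_mod_cast key
  
lemma choose_ratio_two (N m : ℕ) (hm : 2 ≤ m) (hmN : m ≤ N) :
    ((N - 2).choose (m - 2) : ℝ)
      = (N.choose m : ℝ) * m * ((m : ℝ) - 1) / ((N : ℝ) * ((N : ℝ) - 1)) := by
  have h1 : ((N - 1 - 1).choose (m - 1 - 1) : ℝ)
      = ((N - 1).choose (m - 1) : ℝ) * (↑(m - 1)) / (↑(N - 1)) :=
    choose_ratio_one (N - 1) (m - 1) (by omega) (by omega)
  have e1 : N - 1 - 1 = N - 2 := by omega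
  have e2 : m - 1 - 1 = m - 2 := by omega
  have e3 : ((m - 1 : ℕ) : ℝ) = (m : ℝ) - 1 := by
    push_cast [Nat.cast_sub (by omega : 1 ≤ m)]; ring
  have e4 : ((N - 1 : ℕ) : ℝ) = (N : ℝ) - 1 := by
    push_cast [Nat.cast_sub (by omega : 1 ≤ N)]; ring
  rw [e1, e2, e3, e4] at h1
  rw [h1, choose_ratio_one N m (by omega) hmN]
  have hN0 : (N : ℝ) ≠ 0 := by
    have : 2 ≤ N := le_trans hm hmN
    positivity
  have hN1 : (N : ℝ) - 1 ≠ 0 := by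
    have : 2 ≤ N := le_trans hm hmN
    have : (2 : ℝ) ≤ N := by exact_mod_cast this
    nlinarith
  field_simp

lemma condE_linear (U : Finset α) (m : ℕ) (hm : 1 ≤ m) (hmU : m ≤ U.card) (f : α → ℝ) :
    (∑ A ∈ U.powersetCard m, ∑ j ∈ A, f j) / (U.card.choose m : ℝ)
      = ((m : ℝ) / (U.card : ℝ)) * ∑ j ∈ U, f j := by
  rw [sum_pow_linear U m hm f, choose_ratio_one U.card m hm hmU]
  have hC : (U.card.choose m : ℝ) ≠ 0 := by
    have := Nat.choose_pos hmU
    positivity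
  have hN0 : (U.card : ℝ) ≠ 0 := by
    have : 1 ≤ U.card := le_trans hm hmU
    positivity
  field_simp

lemma condE_sq (U : Finset α) (m : ℕ) (hm : 1 ≤ m) (hmU : m ≤ U.card) (f : α → ℝ) :
    (∑ A ∈ U.powersetCard m, (∑ j ∈ A, f j) ^ 2) / (U.card.choose m : ℝ)
      = ((m : ℝ) / (U.card : ℝ)) * ∑ j ∈ U, f j ^ 2
        + ((m : ℝ) * ((m : ℝ) - 1) / ((U.card : ℝ) * ((U.card : ℝ) - 1)))
          * ((∑ j ∈ U, f j) ^ 2 - ∑ j ∈ U, f j ^ 2) := by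
  have hC : (U.card.choose m : ℝ) ≠ 0 := by
    have := Nat.choose_pos hmU
    positivity
  have hN0 : (U.card : ℝ) ≠ 0 := by
    have : 1 ≤ U.card := le_trans hm hmU
    positivity
  rw [sum_pow_sq U m hm f]
  by_cases h2 : 2 ≤ m
  · rw [if_pos h2, choose_ratio_two U.card m h2 hmU, choose_ratio_one U.card m hm hmU]
    have hN1 : (U.card : ℝ) - 1 ≠ 0 := by
      have : 2 ≤ U.card := le_trans h2 hmU
      have : (2 : ℝ) ≤ U.card := by exact_mod_cast this
      nlinarith
    field_simp
  · have hm1 : m = 1 := by omega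
    subst hm1
    rw [if_neg h2, choose_ratio_one U.card 1 le_rfl hmU]
    norm_num
    rw [div_self hN0, one_mul, div_eq_inv_mul]

set_option maxHeartbeats 1000000 in
lemma endgame (p q n nc kcr T1 T2 T3 : ℝ)
    (hp : 0 < p) (hq : 0 < q) (hn : 0 < n) (hnc : 0 < nc) (hnc1 : nc - 1 ≠ 0)
    (hpnq : q < p * n) (hkcr : kcr = p * nc / q) :
    (1/(n*p))^2 * ((q - q^2*(p*n-1)/(p*n-q)) * ((kcr/nc) * T1)
      + (q^2*(p*n-1)/(p*n-q) - q^2) * ((kcr/nc)*T2 + (kcr*(kcr-1)/(nc*(nc-1)))*(T3^2 - T2)))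
    = ((1-q)/(n*p-q)) * ((1/n)*T1 - ((1/n)*T3)^2
        + ((p-q)/(p*(nc-1))) * ((1/nc)*((nc/n)^2*T2) - ((1/nc)*((nc/n)*T3))^2)) := by
  subst hkcr
  have h1 : p*n - q ≠ 0 := by nlinarith
  have h2 : n*p - q ≠ 0 := by nlinarith
  have hp' : p ≠ 0 := ne_of_gt hp
  have hq' : q ≠ 0 := ne_of_gt hq
  have hn' : n ≠ 0 := ne_of_gt hn
  have hnc' : nc ≠ 0 := ne_of_gt hnc
  field_simp
  ring


set_option maxHeartbeats 1000000 in
/-- in the `β = 1` clustered two-stage design (Stage 1: `U` the union of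
`pn_c/q` uniformly random clusters from an equal-size partition `Cl` of `[n]` into `n_c`
clusters; Stage 2 conditional on `U`: `z^1` a uniformly random size-`pn` subset of `U`),
with `pn > q` and `n_c ≥ 2`, the expectation over `U` of the conditional variance of
`TTE-hat = (1/(np)) Σ_j L_j z^1_j` given `U` equals
`((1−q)/(np−q)) · [ Var̂_{j∈[n]}(L_j) + ((p−q)/(p(n_c−1))) · Var̂_{π∈Π}(L̄_π) ]`. -/
theorem stmt_14 (n n_c s : ℕ) (hnc : 2 ≤ n_c) (hns : n = n_c * s)
    (p q : ℝ) (hp0 : 0 < p) (hp1 : p < 1) (hpq : p ≤ q) (hq1 : q ≤ 1)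
    (hpnq : q < p * (n : ℝ))
    (Cl : Finset (Finset (Fin n))) (hClcard : Cl.card = n_c)
    (hdisj : ∀ π ∈ Cl, ∀ π' ∈ Cl, π ≠ π' → Disjoint π π')
    (hcover : ∀ i : Fin n, ∃ π ∈ Cl, i ∈ π)
    (hsize : ∀ π ∈ Cl, π.card = s)
    (kc : ℕ) (hkc : (kc : ℝ) = p * (n_c : ℝ) / q)
    (m : ℕ) (hm : (m : ℝ) = p * (n : ℝ))
    (Nbhd : Fin n → Finset (Fin n)) (c1 : Fin n → Fin n → ℝ)
    (L : Fin n → ℝ)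
    (hL : ∀ j, L j = ∑ i ∈ Finset.univ.filter (fun i => j ∈ Nbhd i), c1 i j)
    (Lbar : Finset (Fin n) → ℝ)
    (hLbar : ∀ π, Lbar π = ((n_c : ℝ) / (n : ℝ)) * ∑ j ∈ π, L j)
    (TTEhat : Finset (Fin n) → ℝ)
    (hT : ∀ A, TTEhat A = (1 / ((n : ℝ) * p)) * ∑ j ∈ A, L j)
    (condE : Finset (Finset (Fin n)) → (Finset (Fin n) → ℝ) → ℝ)
    (hcondE : ∀ C g, condE C g =
      (∑ A ∈ (C.sup id).powersetCard m, g A) / ((kc * s).choose m : ℝ)) :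
    (∑ C ∈ Cl.powersetCard kc,
        (condE C (fun A => (TTEhat A) ^ 2) - (condE C TTEhat) ^ 2)) /
      (n_c.choose kc : ℝ) =
      ((1 - q) / ((n : ℝ) * p - q)) *
        (((1 / (n : ℝ)) * ∑ j, (L j) ^ 2 - ((1 / (n : ℝ)) * ∑ j, L j) ^ 2) +
          ((p - q) / (p * ((n_c : ℝ) - 1))) *
            ((1 / (n_c : ℝ)) * ∑ π ∈ Cl, (Lbar π) ^ 2 -
              ((1 / (n_c : ℝ)) * ∑ π ∈ Cl, Lbar π) ^ 2)) := by
  have hq0 : 0 < q := lt_of_lt_of_le hp0 hpq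
  have hnr : (0:ℝ) < (n:ℝ) := by nlinarith
  have hn0 : 0 < n := by exact_mod_cast hnr
  have hncr : (0:ℝ) < (n_c:ℝ) := by exact_mod_cast (by omega : 0 < n_c)
  have hm1 : 1 ≤ m := by
    have h : (0:ℝ) < (m:ℝ) := by rw [hm]; nlinarith
    have : 0 < m := by exact_mod_cast h
    omega
  have hkc1 : 1 ≤ kc := by
    have h : (0:ℝ) < (kc:ℝ) := by rw [hkc]; positivity
    have : 0 < kc := by exact_mod_cast h
    omega
  have hkcnc : kc ≤ n_c := by
    have h : (kc:ℝ) ≤ (n_c:ℝ) := by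
      rw [hkc, div_le_iff₀ hq0]; nlinarith
    exact_mod_cast h
  have hnsr : (n:ℝ) = (n_c:ℝ) * (s:ℝ) := by rw [hns]; push_cast; ring
  have hNr : ((kc * s : ℕ) : ℝ) = p * (n:ℝ) / q := by
    push_cast
    rw [hkc, hnsr]; ring
  have hmN : m ≤ kc * s := by
    have h : (m:ℝ) ≤ ((kc * s : ℕ):ℝ) := by
      rw [hm, hNr, le_div_iff₀ hq0]; nlinarith
    exact_mod_cast h
  -- cards of unions
  have hpd : ∀ C : Finset (Finset (Fin n)), C ⊆ Cl → (↑C : Set (Finset (Fin n))).PairwiseDisjoint id := by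
    intro C hC π hπ π' hπ' hne
    exact hdisj π (hC (Finset.mem_coe.mp hπ)) π' (hC (Finset.mem_coe.mp hπ')) hne
  have hcard : ∀ C ∈ Cl.powersetCard kc, (C.sup id).card = kc * s := by
    intro C hC
    obtain ⟨hCsub, hCcard⟩ := mem_powersetCard.mp hC
    rw [sup_eq_biUnion, card_biUnion]
    · simp only [id_eq]
      rw [sum_congr rfl (fun π hπ => hsize π (hCsub hπ)), sum_const, hCcard, smul_eq_mul]
    · intro π hπ π' hπ' hne
      exact hdisj π (hCsub hπ) π' (hCsub hπ') hne
  have hsumU : ∀ C ∈ Cl.powersetCard kc, ∀ g : Fin n → ℝ,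
      ∑ j ∈ C.sup id, g j = ∑ π ∈ C, ∑ j ∈ π, g j := by
    intro C hC g
    rw [sup_eq_biUnion, sum_biUnion (hpd C (mem_powersetCard.mp hC).1)]
    simp only [id_eq]
  have huniv : ∀ g : Fin n → ℝ, ∑ j, g j = ∑ π ∈ Cl, ∑ j ∈ π, g j := by
    intro g
    have he : Cl.biUnion id = Finset.univ := by
      refine eq_univ_of_forall fun j => ?_
      obtain ⟨π, hπ, hj⟩ := hcover j
      exact mem_biUnion.mpr ⟨π, hπ, hj⟩
    rw [← he, sum_biUnion (hpd Cl le_rfl)]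
    simp only [id_eq]
  -- abbreviations
  set Nr : ℝ := ((kc * s : ℕ) : ℝ) with hNrdef
  set Qm : ℝ := (m : ℝ) / Nr with hQm
  set K : ℝ := (m : ℝ) * ((m : ℝ) - 1) / (Nr * (Nr - 1)) with hK
  set c2 : ℝ := (1 / ((n:ℝ) * p)) ^ 2 with hc2
  have hterm : ∀ C ∈ Cl.powersetCard kc,
      condE C (fun A => (TTEhat A) ^ 2) - (condE C TTEhat) ^ 2
      = c2 * ((Qm - K) * (∑ π ∈ C, ∑ j ∈ π, (L j) ^ 2)
          + (K - Qm ^ 2) * (∑ π ∈ C, ∑ j ∈ π, L j) ^ 2) := by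
    intro C hC
    have hUc := hcard C hC
    have hmU : m ≤ (C.sup id).card := hUc ▸ hmN
    have h1 : condE C TTEhat = (1 / ((n:ℝ) * p)) * (Qm * ∑ π ∈ C, ∑ j ∈ π, L j) := by
      rw [hcondE]
      rw [sum_congr rfl (fun A _ => hT A), ← mul_sum, mul_div_assoc, ← hUc,
        condE_linear _ m hm1 hmU L, hUc, hsumU C hC L]
    have h2 : condE C (fun A => (TTEhat A) ^ 2) = c2 *
        (Qm * (∑ π ∈ C, ∑ j ∈ π, (L j) ^ 2)
          + K * ((∑ π ∈ C, ∑ j ∈ π, L j) ^ 2 - ∑ π ∈ C, ∑ j ∈ π, (L j) ^ 2)) := by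
      rw [hcondE]
      have hb : ∀ A ∈ (C.sup id).powersetCard m,
          (TTEhat A) ^ 2 = c2 * (∑ j ∈ A, L j) ^ 2 := by
        intro A _
        rw [hT, hc2]; ring
      rw [sum_congr rfl hb, ← mul_sum, mul_div_assoc, ← hUc,
        condE_sq _ m hm1 hmU L, hUc, hsumU C hC (fun j => (L j)^2), hsumU C hC L]
    rw [h1, h2, hc2]
    ring
  rw [sum_congr rfl hterm]
  -- pull out constants
  have e1 : ∀ C ∈ Cl.powersetCard kc,
      c2 * ((Qm - K) * (∑ π ∈ C, ∑ j ∈ π, (L j) ^ 2)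
          + (K - Qm ^ 2) * (∑ π ∈ C, ∑ j ∈ π, L j) ^ 2)
      = (c2 * (Qm - K)) * (∑ π ∈ C, ∑ j ∈ π, (L j) ^ 2)
          + (c2 * (K - Qm ^ 2)) * (∑ π ∈ C, ∑ j ∈ π, L j) ^ 2 := fun C _ => by ring
  rw [sum_congr rfl e1, sum_add_distrib, ← mul_sum, ← mul_sum, add_div, mul_div_assoc,
    mul_div_assoc]
  have hkcCl : kc ≤ Cl.card := hClcard ▸ hkcnc
  have hA : (∑ C ∈ Cl.powersetCard kc, ∑ π ∈ C, ∑ j ∈ π, (L j) ^ 2) / ((n_c.choose kc : ℕ) : ℝ)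
      = ((kc:ℝ) / (n_c:ℝ)) * ∑ π ∈ Cl, ∑ j ∈ π, (L j) ^ 2 := by
    have h := condE_linear Cl kc hkc1 hkcCl (fun π => ∑ j ∈ π, (L j) ^ 2)
    rw [hClcard] at h
    exact h
  have hB : (∑ C ∈ Cl.powersetCard kc, (∑ π ∈ C, ∑ j ∈ π, L j) ^ 2) / ((n_c.choose kc : ℕ) : ℝ)
      = ((kc:ℝ) / (n_c:ℝ)) * ∑ π ∈ Cl, (∑ j ∈ π, L j) ^ 2
        + ((kc:ℝ) * ((kc:ℝ) - 1) / ((n_c:ℝ) * ((n_c:ℝ) - 1)))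
          * ((∑ π ∈ Cl, ∑ j ∈ π, L j) ^ 2 - ∑ π ∈ Cl, (∑ j ∈ π, L j) ^ 2) := by
    have h := condE_sq Cl kc hkc1 hkcCl (fun π => ∑ j ∈ π, L j)
    rw [hClcard] at h
    exact h
  rw [hA, hB]
  -- RHS rewrites
  rw [huniv (fun j => (L j) ^ 2), huniv L]
  have hLb1 : ∑ π ∈ Cl, (Lbar π) ^ 2
      = ((n_c:ℝ) / (n:ℝ)) ^ 2 * ∑ π ∈ Cl, (∑ j ∈ π, L j) ^ 2 := by
    rw [mul_sum]
    exact sum_congr rfl fun π _ => by rw [hLbar]; ring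
  have hLb2 : ∑ π ∈ Cl, Lbar π = ((n_c:ℝ) / (n:ℝ)) * ∑ π ∈ Cl, ∑ j ∈ π, L j := by
    rw [mul_sum]
    exact sum_congr rfl fun π _ => by rw [hLbar]
  rw [hLb1, hLb2]
  -- now pure algebra
  set T1 : ℝ := ∑ π ∈ Cl, ∑ j ∈ π, (L j) ^ 2
  set T2 : ℝ := ∑ π ∈ Cl, (∑ j ∈ π, L j) ^ 2
  set T3 : ℝ := ∑ π ∈ Cl, ∑ j ∈ π, L j
  have hp' : p ≠ 0 := ne_of_gt hp0
  have hq' : q ≠ 0 := ne_of_gt hq0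
  have hn' : (n:ℝ) ≠ 0 := ne_of_gt hnr
  have hnc' : (n_c:ℝ) ≠ 0 := ne_of_gt hncr
  have hnc1 : (n_c:ℝ) - 1 ≠ 0 := by
    have : (2:ℝ) ≤ (n_c:ℝ) := by exact_mod_cast hnc
    nlinarith
  have hnpq : (n:ℝ) * p - q ≠ 0 := by nlinarith
  have hNrval : Nr = p * (n:ℝ) / q := hNr
  have hNr1 : Nr - 1 ≠ 0 := by
    rw [hNrval]
    have : 1 < p * (n:ℝ) / q := by
      rw [lt_div_iff₀ hq0]; nlinarith
    nlinarith
  have hNr0 : Nr ≠ 0 := by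
    rw [hNrval]; positivity
  have hpn0 : p * (n:ℝ) ≠ 0 := by positivity
  have h1 : p * (n:ℝ) - q ≠ 0 := by nlinarith
  have hQval : Qm = q := by
    rw [hQm, hm, hNrval]
    field_simp
  have hKval : K = q ^ 2 * (p * (n:ℝ) - 1) / (p * (n:ℝ) - q) := by
    rw [hK, hm, hNrval]
    field_simp
  rw [hQval, hKval, hc2]
  linear_combination endgame p q (n:ℝ) (n_c:ℝ) (kc:ℝ) T1 T2 T3 hp0 hq0 hnr hncr hnc1 hpnq hkc
end

section
/- In the β = 1 clustered two-stage design (Stage 1: union U of pn_c/q uniformly random clusters from an equal-size partition Π of [n] into n_c ≥ 2 clusters; Stage 2 conditional on U: z^1 a uniformly random size-(pn) subset of U), the variance over U of the conditional expectation of TTE-hat = (1/(np)) Σ_j L_j z^1_j given U equals ((q−p)/(p(n_c−1))) · Var̂_{π∈Π}(L̄_π). -/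
/-!
Given the selected clusters `C`, the second stage draws a uniform `m`-subset of `U = ⋃ C`, which
contains each unit of `U` with probability `m / |U|`; hence the conditional expectation of the
estimator is the cluster mean `(1/kc) ∑_{π ∈ C} L̄_π`. Its variance over `C` is that of the mean of
a simple random sample of `kc` out of `n_c` clusters, namely `(n_c - kc) / (kc (n_c - 1))` times the
population variance (the finite population correction), and `kc q = p n_c` turns this factor into
`(q - p) / (p (n_c - 1))`.

Both sampling moments come from double counting: a fixed `r`-subset of `S` lies in
`C(|S|, k) C(k, r) / C(|S|, r)` of the `k`-subsets of `S`.
-/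

namespace Finset

variable {α : Type*} [DecidableEq α]

theorem card_filter_powersetCard_subset_mul_choose {s t : Finset α} (hst : s ⊆ t) (k : ℕ) :
    #{A ∈ t.powersetCard k | s ⊆ A} * (#t).choose #s = (#t).choose k * k.choose #s := by
  obtain hsk | hks := le_or_gt #s k
  · rw [card_filter_powersetCard_subset s t k hst hsk, Nat.choose_mul hsk, mul_comm]
  · have hempty : {A ∈ t.powersetCard k | s ⊆ A} = ∅ :=
      filter_false_of_mem fun A hA hsA =>
        (card_le_card hsA).not_gt ((mem_powersetCard.1 hA).2 ▸ hks)
    rw [hempty, Nat.choose_eq_zero_of_lt hks]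
    simp

theorem card_filter_powersetCard_mem {S : Finset α} {j : α} (hj : j ∈ S) (k : ℕ) :
    (#{A ∈ S.powersetCard k | j ∈ A} : ℝ) = (#S).choose k * k / #S := by
  have h := card_filter_powersetCard_subset_mul_choose (singleton_subset_iff.2 hj) k
  simp only [singleton_subset_iff, card_singleton, Nat.choose_one_right] at h
  have hS : (#S : ℝ) ≠ 0 := by exact_mod_cast (card_pos.2 ⟨j, hj⟩).ne'
  rw [eq_div_iff hS]
  exact_mod_cast h

theorem card_filter_powersetCard_mem_mem {S : Finset α} {i j : α} (hi : i ∈ S) (hj : j ∈ S)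
    (hij : i ≠ j) (k : ℕ) :
    (#{A ∈ S.powersetCard k | i ∈ A ∧ j ∈ A} : ℝ) =
      (#S).choose k * (k * (k - 1)) / (#S * (#S - 1)) := by
  have hijS : {i, j} ⊆ S := insert_subset hi (singleton_subset_iff.2 hj)
  have hpair : #({i, j} : Finset α) = 2 := card_pair hij
  have h := card_filter_powersetCard_subset_mul_choose hijS k
  simp only [insert_subset_iff, singleton_subset_iff, hpair] at h
  have hS : (2 : ℝ) ≤ #S := by exact_mod_cast hpair ▸ card_le_card hijS
  have h' := congrArg (Nat.cast : ℕ → ℝ) h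
  push_cast [Nat.cast_choose_two] at h'
  rw [eq_div_iff (by nlinarith)]
  linear_combination 2 * h'

theorem sum_sum_mem_comm {P : Finset (Finset α)} {S : Finset α} (hP : ∀ A ∈ P, A ⊆ S)
    {β : Type*} [AddCommMonoid β] (g : Finset α → α → β) :
    ∑ A ∈ P, ∑ j ∈ A, g A j = ∑ j ∈ S, ∑ A ∈ P with j ∈ A, g A j :=
  sum_comm' fun A j => by
    simp only [mem_filter]
    exact ⟨fun h => ⟨⟨h.1, h.2⟩, hP A h.1 h.2⟩, fun h => h.1⟩

theorem sum_powersetCard_sum (S : Finset α) (k : ℕ) (f : α → ℝ) :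
    ∑ A ∈ S.powersetCard k, ∑ j ∈ A, f j = (#S).choose k * k / #S * ∑ j ∈ S, f j := by
  rw [sum_sum_mem_comm fun A hA => (mem_powersetCard.1 hA).1, mul_sum]
  refine sum_congr rfl fun j hj => ?_
  rw [sum_const, nsmul_eq_mul, card_filter_powersetCard_mem hj]

theorem sum_powersetCard_sum_sq (S : Finset α) (k : ℕ) (f : α → ℝ) :
    ∑ A ∈ S.powersetCard k, (∑ j ∈ A, f j) ^ 2 =
      (#S).choose k * (k / #S * ∑ j ∈ S, f j ^ 2 +
        k * (k - 1) / (#S * (#S - 1)) * ((∑ j ∈ S, f j) ^ 2 - ∑ j ∈ S, f j ^ 2)) := by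
  have hP : ∀ A ∈ S.powersetCard k, A ⊆ S := fun A hA => (mem_powersetCard.1 hA).1
  set c₁ : ℝ := (#S).choose k * k / #S
  set c₂ : ℝ := (#S).choose k * (k * (k - 1)) / (#S * (#S - 1))
  calc ∑ A ∈ S.powersetCard k, (∑ j ∈ A, f j) ^ 2
      = ∑ A ∈ S.powersetCard k, ∑ i ∈ A, ∑ j ∈ A, f i * f j := by simp_rw [sq, sum_mul_sum]
    _ = ∑ i ∈ S, ∑ j ∈ S, (#{A ∈ S.powersetCard k | i ∈ A ∧ j ∈ A} : ℝ) * (f i * f j) := by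
      rw [sum_sum_mem_comm hP]
      refine sum_congr rfl fun i _ => ?_
      rw [sum_sum_mem_comm fun A hA => hP A (mem_filter.1 hA).1]
      simp_rw [filter_filter, sum_const, nsmul_eq_mul]
    _ = ∑ i ∈ S, ∑ j ∈ S, (c₂ + if i = j then c₁ - c₂ else 0) * (f i * f j) := by
      refine sum_congr rfl fun i hi => sum_congr rfl fun j hj => ?_
      obtain rfl | hij := eq_or_ne i j
      · simp [c₁, card_filter_powersetCard_mem hi]
      · rw [card_filter_powersetCard_mem_mem hi hj hij, if_neg hij, add_zero]
    _ = _ := by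
      simp_rw [add_mul, sum_add_distrib, ite_mul, zero_mul, sum_ite_eq,
        sum_ite_of_true fun _ hx => hx, ← mul_sum, ← sum_mul, ← sq, c₁, c₂]
      ring

theorem sum_powersetCard_sup_sum_div_choose {C : Finset (Finset α)}
    (hdisj : (C : Set (Finset α)).PairwiseDisjoint id) {s : ℕ} (hsize : ∀ π ∈ C, #π = s)
    {m : ℕ} (hm : m ≤ #C * s) (f : α → ℝ) :
    (∑ A ∈ (C.sup id).powersetCard m, ∑ j ∈ A, f j) / (#C * s).choose m =
      m / (#C * s) * ∑ π ∈ C, ∑ j ∈ π, f j := by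
  have hcard : #(C.sup id) = #C * s := by
    rw [sup_eq_biUnion, card_biUnion hdisj]
    exact sum_const_nat hsize
  have hchoose : ((#C * s).choose m : ℝ) ≠ 0 := by exact_mod_cast (Nat.choose_pos hm).ne'
  rw [sum_powersetCard_sum, hcard, sup_eq_biUnion, sum_biUnion hdisj]
  field_simp
  simp only [Nat.cast_mul, id]

end Finset

open Finset

noncomputable def empiricalVariance {ι : Type*} (s : Finset ι) (a : ι → ℝ) : ℝ :=
  (∑ i ∈ s, a i ^ 2) / #s - ((∑ i ∈ s, a i) / #s) ^ 2

theorem empiricalVariance_powersetCard_mean {α : Type*} [DecidableEq α] (S : Finset α) {k : ℕ}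
    (hkS : k ≤ #S) (hS : 1 < #S) (f : α → ℝ) :
    empiricalVariance (S.powersetCard k) (fun A => (∑ j ∈ A, f j) / k) =
      (#S - k) / (k * (#S - 1)) * empiricalVariance S f := by
  have hC : ((#S).choose k : ℝ) ≠ 0 := by exact_mod_cast (Nat.choose_pos hkS).ne'
  have hS' : (#S : ℝ) - 1 ≠ 0 := sub_ne_zero.2 (by exact_mod_cast hS.ne')
  simp_rw [empiricalVariance, card_powersetCard, div_pow, ← sum_div, sum_powersetCard_sum,
    sum_powersetCard_sum_sq]
  field_simp
  ring

theorem stmt_15_general (n n_c s : ℕ) (hnc : 2 ≤ n_c) (hns : n = n_c * s)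
    (p q : ℝ) (hp0 : 0 < p) (hpq : p ≤ q) (hq1 : q ≤ 1)
    (Cl : Finset (Finset (Fin n))) (hClcard : Cl.card = n_c)
    (hdisj : ∀ π ∈ Cl, ∀ π' ∈ Cl, π ≠ π' → Disjoint π π')
    (hsize : ∀ π ∈ Cl, π.card = s)
    (kc : ℕ) (hkc : (kc : ℝ) = p * (n_c : ℝ) / q)
    (m : ℕ) (hm : (m : ℝ) = p * (n : ℝ))
    (L : Fin n → ℝ)
    (Lbar : Finset (Fin n) → ℝ)
    (hLbar : ∀ π, Lbar π = ((n_c : ℝ) / (n : ℝ)) * ∑ j ∈ π, L j)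
    (TTEhat : Finset (Fin n) → ℝ)
    (hT : ∀ A, TTEhat A = (1 / ((n : ℝ) * p)) * ∑ j ∈ A, L j)
    (condE : Finset (Finset (Fin n)) → (Finset (Fin n) → ℝ) → ℝ)
    (hcondE : ∀ C g, condE C g =
      (∑ A ∈ (C.sup id).powersetCard m, g A) / ((kc * s).choose m : ℝ)) :
    (∑ C ∈ Cl.powersetCard kc, (condE C TTEhat) ^ 2) / (n_c.choose kc : ℝ) -
      ((∑ C ∈ Cl.powersetCard kc, condE C TTEhat) / (n_c.choose kc : ℝ)) ^ 2 =
      ((q - p) / (p * ((n_c : ℝ) - 1))) *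
        ((1 / (n_c : ℝ)) * ∑ π ∈ Cl, (Lbar π) ^ 2 -
          ((1 / (n_c : ℝ)) * ∑ π ∈ Cl, Lbar π) ^ 2) := by
  have hq : 0 < q := hp0.trans_le hpq
  have hn : (n : ℝ) = n_c * s := by rw [hns, Nat.cast_mul]
  have hkq : (kc : ℝ) * q = p * n_c := by rw [hkc]; field_simp
  have hkc_pos : 0 < kc := by exact_mod_cast (show (0 : ℝ) < kc by rw [hkc]; positivity)
  have hkc_le : kc ≤ n_c := by exact_mod_cast (show (kc : ℝ) ≤ n_c by nlinarith)
  have hm_le : m ≤ kc * s := by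
    have : (m : ℝ) ≤ kc * s :=
      calc (m : ℝ) = kc * s * q := by linear_combination hm + p * hn - s * hkq
        _ ≤ kc * s := mul_le_of_le_one_right (by positivity) hq1
    exact_mod_cast this
  have hcond : ∀ C ∈ Cl.powersetCard kc, condE C TTEhat = (∑ π ∈ C, Lbar π) / kc := by
    intro C hC
    obtain ⟨hCCl, hCcard⟩ := mem_powersetCard.1 hC
    simp_rw [hcondE, hT, ← mul_sum, mul_div_assoc, ← hCcard,
      sum_powersetCard_sup_sum_div_choose (fun π hπ π' hπ' => hdisj π (hCCl hπ) π' (hCCl hπ'))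
        (fun π hπ => hsize π (hCCl hπ)) (hCcard ▸ hm_le), hLbar, ← mul_sum]
    rw [hm, hn, hCcard]
    field_simp
  have hcoef : ((n_c : ℝ) - kc) / (kc * (n_c - 1)) = (q - p) / (p * (n_c - 1)) := by
    have hnc1 : (0 : ℝ) < n_c - 1 := sub_pos.2 (by exact_mod_cast hnc)
    rw [div_eq_div_iff (mul_pos (Nat.cast_pos.2 hkc_pos) hnc1).ne' (mul_pos hp0 hnc1).ne']
    linear_combination (1 - n_c) * hkq
  have hvar := empiricalVariance_powersetCard_mean Cl (hClcard ▸ hkc_le)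
    (hClcard ▸ hnc) Lbar
  simp only [empiricalVariance, card_powersetCard, hClcard] at hvar
  rw [sum_congr rfl fun C hC => congrArg (· ^ 2) (hcond C hC), sum_congr rfl hcond, hvar, hcoef]
  ring

/-- in the `β = 1` clustered two-stage design (Stage 1: `U` the union of
`pn_c/q` uniformly random clusters from an equal-size partition `Cl` of `[n]` into
`n_c ≥ 2` clusters; Stage 2 conditional on `U`: `z^1` a uniformly random size-`pn`
subset of `U`), the variance over `U` of the conditional expectation of
`TTE-hat = (1/(np)) Σ_j L_j z^1_j` given `U` equals
`((q−p)/(p(n_c−1))) · Var̂_{π∈Π}(L̄_π)`. -/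
theorem stmt_15 (n n_c s : ℕ) (hnc : 2 ≤ n_c) (hns : n = n_c * s)
    (p q : ℝ) (hp0 : 0 < p) (hp1 : p < 1) (hpq : p ≤ q) (hq1 : q ≤ 1)
    (Cl : Finset (Finset (Fin n))) (hClcard : Cl.card = n_c)
    (hdisj : ∀ π ∈ Cl, ∀ π' ∈ Cl, π ≠ π' → Disjoint π π')
    (hcover : ∀ i : Fin n, ∃ π ∈ Cl, i ∈ π)
    (hsize : ∀ π ∈ Cl, π.card = s)
    (kc : ℕ) (hkc : (kc : ℝ) = p * (n_c : ℝ) / q)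
    (m : ℕ) (hm : (m : ℝ) = p * (n : ℝ))
    (Nbhd : Fin n → Finset (Fin n)) (c1 : Fin n → Fin n → ℝ)
    (L : Fin n → ℝ)
    (hL : ∀ j, L j = ∑ i ∈ Finset.univ.filter (fun i => j ∈ Nbhd i), c1 i j)
    (Lbar : Finset (Fin n) → ℝ)
    (hLbar : ∀ π, Lbar π = ((n_c : ℝ) / (n : ℝ)) * ∑ j ∈ π, L j)
    (TTEhat : Finset (Fin n) → ℝ)
    (hT : ∀ A, TTEhat A = (1 / ((n : ℝ) * p)) * ∑ j ∈ A, L j)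
    (condE : Finset (Finset (Fin n)) → (Finset (Fin n) → ℝ) → ℝ)
    (hcondE : ∀ C g, condE C g =
      (∑ A ∈ (C.sup id).powersetCard m, g A) / ((kc * s).choose m : ℝ)) :
    (∑ C ∈ Cl.powersetCard kc, (condE C TTEhat) ^ 2) / (n_c.choose kc : ℝ) -
      ((∑ C ∈ Cl.powersetCard kc, condE C TTEhat) / (n_c.choose kc : ℝ)) ^ 2 =
      ((q - p) / (p * ((n_c : ℝ) - 1))) *
        ((1 / (n_c : ℝ)) * ∑ π ∈ Cl, (Lbar π) ^ 2 -
          ((1 / (n_c : ℝ)) * ∑ π ∈ Cl, Lbar π) ^ 2) :=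
  stmt_15_general n n_c s hnc hns p q hp0 hpq hq1 Cl hClcard hdisj hsize kc hkc m hm L Lbar hLbar
    TTEhat hT condE hcondE
end
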